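/- arXiv:math/0608259 — 6 statements merged into one kernel-verified Lean document; each statement's English description precedes it below -/
import Mathlib

section
/- Let X ⊆ Σ^ℤ be a subshift, let Y⁻ ⊆ X⁻ be dense in X⁻, and let g : {(y⁻,σ) ∈ Y⁻ × Σ : σ ∈ Γ₁⁺(y⁻)} → [0,1] be continuous (for the subspace topology) with Σ_{σ ∈ Γ₁⁺(y⁻)} g(y⁻,σ) = 1 for every y⁻ ∈ Y⁻. Then for every x⁻ ∈ Y⁻ and every α ∈ Γ₁⁺(x⁻) \ Δ₁⁺(x⁻) one has g(x⁻,α) = 0. -/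
open Set Filter Topology

/-! Basic symbolic dynamics notions.

* The alphabet is a nonempty finite type `A` with the discrete topology; `A^ℤ` and `A^ℕ`
  carry the product topology.
* A left-infinite sequence `x⁻ = (x_i)_{i ≤ 0}` is encoded as `u : ℕ → A` with `u n = x (-n)`.
* Finite words are lists, read left to right.
-/

/-- The shift `S`. -/
def shiftMap {A : Type*} (x : ℤ → A) : ℤ → A := fun i => x (i + 1)

/-- A subshift: a nonempty closed shift-invariant subset of `A^ℤ`. -/
def IsSubshift {A : Type*} [TopologicalSpace A] (X : Set (ℤ → A)) : Prop :=
  X.Nonempty ∧ IsClosed X ∧ shiftMap '' X = X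

/-- `X⁻`: the left-infinite rays of points of `X` (encoded via `u n = x (-n)`). -/
def Xminus {A : Type*} (X : Set (ℤ → A)) : Set (ℕ → A) :=
  {u | ∃ x ∈ X, ∀ n : ℕ, u n = x (-(n : ℤ))}

/-- The word `w` occurs in `x` (as a block of consecutive coordinates). -/
def Occurs {A : Type*} (w : List A) (x : ℤ → A) : Prop :=
  ∃ i : ℤ, ∀ j : Fin w.length, x (i + ((j : ℕ) : ℤ)) = w.get j

/-- A finite word is admissible for `X` if it occurs in some point of `X`. -/
def Admissible {A : Type*} (X : Set (ℤ → A)) (w : List A) : Prop :=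
  ∃ x ∈ X, Occurs w x

/-- The left ray `u` ends in the word `w`, i.e. `(x_{-k},…,x_0) = w` where `|w| = k+1`. -/
def EndsIn {A : Type*} (u : ℕ → A) (w : List A) : Prop :=
  ∀ j : Fin w.length, u (w.length - 1 - (j : ℕ)) = w.get j

/-- `Γ₁⁺(x⁻)`: the letters that can follow the left ray `u` in `X`. -/
def Gamma1 {A : Type*} (X : Set (ℤ → A)) (u : ℕ → A) : Set A :=
  {σ | ∃ x ∈ X, (∀ n : ℕ, x (-(n : ℤ)) = u n) ∧ x 1 = σ}

/-- `x` carries the word `b` on the coordinate interval `[-(|b| - 1), 0]`. -/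
def EndsAtZero {A : Type*} (x : ℤ → A) (b : List A) : Prop :=
  ∀ j : Fin b.length, x (((j : ℕ) : ℤ) - ((b.length : ℤ) - 1)) = b.get j

/-- `c ∈ ω⁺(b)`: every point of `X` carrying `b` ending at coordinate `0` can be modified
on the positive coordinates so as to continue with the word `c`. -/
def OmegaWord {A : Type*} (X : Set (ℤ → A)) (b c : List A) : Prop :=
  ∀ x ∈ X, EndsAtZero x b →
    ∃ x' ∈ X, (∀ i : ℤ, i ≤ 0 → x' i = x i) ∧
      ∀ j : Fin c.length, x' (((j : ℕ) : ℤ) + 1) = c.get j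

/-- `ω₁⁺(b)`. -/
def omega1 {A : Type*} (X : Set (ℤ → A)) (b : List A) : Set A :=
  {σ | OmegaWord X b [σ]}

/-- The word `(x_{-n},…,x_0)` read off the left ray `u`. -/
def lastWord {A : Type*} (u : ℕ → A) (n : ℕ) : List A :=
  List.ofFn fun j : Fin (n + 1) => u (n - (j : ℕ))

/-- `Δ₁⁺(x⁻) = ⋃ₙ ω₁⁺((x_{-n},…,x_0))`. -/
def Delta1 {A : Type*} (X : Set (ℤ → A)) (u : ℕ → A) : Set A :=
  ⋃ n : ℕ, omega1 X (lastWord u n)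

/-- Property g: `Δ₁⁺(x⁻) ≠ ∅` for every `x⁻ ∈ X⁻`. -/
def PropertyG {A : Type*} (X : Set (ℤ → A)) : Prop :=
  ∀ u ∈ Xminus X, (Delta1 X u).Nonempty

/-- A g-function for `X`, encoded as a total function `g : (ℕ → A) → A → ℝ`:
continuity (of the restriction to the graph of `Γ₁⁺`, i.e. of the map on
`{(x⁻,σ) : σ ∈ Γ₁⁺(x⁻)}`), values in `[0,1]` there, and the normalization
`∑_{σ ∈ Γ₁⁺(x⁻)} g (x⁻, σ) = 1`. -/
def IsGFunction {A : Type*} [Fintype A] [TopologicalSpace A] (X : Set (ℤ → A))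
    (g : (ℕ → A) → A → ℝ) : Prop :=
  ContinuousOn (fun p : (ℕ → A) × A => g p.1 p.2)
      {p : (ℕ → A) × A | p.1 ∈ Xminus X ∧ p.2 ∈ Gamma1 X p.1} ∧
  (∀ u ∈ Xminus X, ∀ σ ∈ Gamma1 X u, g u σ ∈ Set.Icc (0 : ℝ) 1) ∧
  (∀ u ∈ Xminus X, ∑ σ : A, (Gamma1 X u).indicator (g u) σ = 1)

/-- Property (D): for every admissible word `b` and letter `σ` with `bσ` admissible there
is a word `a` with `ab` admissible and `σ ∈ ω₁⁺(ab)`. -/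
def PropertyD {A : Type*} (X : Set (ℤ → A)) : Prop :=
  ∀ (b : List A) (σ : A), b ≠ [] → Admissible X (b ++ [σ]) →
    ∃ a : List A, a ≠ [] ∧ Admissible X (a ++ b) ∧ σ ∈ omega1 X (a ++ b)

/-! If `α ∉ Δ₁⁺(x⁻)`, then for every `n` some ray of `X⁻` agreeing with `x⁻` on `[-n, 0]`
cannot be followed by `α`, and by density such rays `yₙ` can be taken in `Y⁻`. Along a
subsequence `Γ₁⁺(yₙ)` is a constant set `Γ ∌ α`. As `X` is compact the graph of `Γ₁⁺` is closed,
so `Γ ⊆ Γ₁⁺(x⁻)`, and continuity of `g` on that graph gives `∑_{σ ∈ Γ} g(x⁻,σ) = 1`. Since `g`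
is nonnegative on `Γ₁⁺(x⁻)` with total mass `1` there, it vanishes at `α`. -/

section Gamma1

variable {A : Type*} {X : Set (ℤ → A)}

lemma isClosed_setOf_mem_Gamma1 [TopologicalSpace A] [CompactSpace A] [T2Space A]
    (hX : IsClosed X) : IsClosed {p : (ℕ → A) × A | p.2 ∈ Gamma1 X p.1} := by
  have h : {p : (ℕ → A) × A | p.2 ∈ Gamma1 X p.1}
      = (fun x : ℤ → A => ((fun n : ℕ => x (-(n : ℤ))), x 1)) '' X := by
    ext ⟨v, σ⟩
    simp [Gamma1, funext_iff, eq_comm]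
  rw [h]
  exact (hX.isCompact.image (by fun_prop)).isClosed

lemma isOpen_setOf_notMem_Gamma1 [TopologicalSpace A] [CompactSpace A] [T2Space A]
    (hX : IsClosed X) (α : A) : IsOpen {v : ℕ → A | α ∉ Gamma1 X v} :=
  (isClosed_setOf_mem_Gamma1 hX).isOpen_compl.preimage (continuous_id.prodMk continuous_const)

lemma exists_mem_Xminus_notMem_Gamma1_of_notMem_omega1 {u : ℕ → A} {n : ℕ} {α : A}
    (h : α ∉ omega1 X (lastWord u n)) :
    ∃ v ∈ Xminus X, (∀ m ≤ n, v m = u m) ∧ α ∉ Gamma1 X v := by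
  simp only [omega1, OmegaWord, mem_ofPred_eq, not_forall] at h
  obtain ⟨x, hx, hend, hno⟩ := h
  refine ⟨fun m => x (-(m : ℤ)), ⟨x, hx, fun n => rfl⟩, fun m hm => ?_, ?_⟩
  · have := hend ⟨n - m, by simp [lastWord]⟩
    simp only [lastWord, List.get_ofFn, List.length_ofFn, Fin.val_cast] at this
    rwa [show n - (n - m) = m by omega, show (((n - m : ℕ) : ℤ)) - (((n + 1 : ℕ) : ℤ) - 1)
      = -(m : ℤ) by omega] at this
  · rintro ⟨x', hx', hx'u, hx'1⟩
    refine hno ⟨x', hx', fun i hi => ?_, fun j => ?_⟩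
    · rw [show i = -(((-i).toNat : ℕ) : ℤ) by omega, hx'u]
    · simp [Fin.fin_one_eq_zero j, hx'1]

lemma exists_mem_notMem_Gamma1_of_notMem_omega1 [TopologicalSpace A] [CompactSpace A]
    [DiscreteTopology A] (hX : IsClosed X) {Y : Set (ℕ → A)}
    (hdense : Xminus X ⊆ closure Y) {u : ℕ → A} {n : ℕ} {α : A}
    (h : α ∉ omega1 X (lastWord u n)) :
    ∃ y ∈ Y, (∀ m ≤ n, y m = u m) ∧ α ∉ Gamma1 X y := by
  obtain ⟨v, hvX, hvu, hvα⟩ := exists_mem_Xminus_notMem_Gamma1_of_notMem_omega1 h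
  have hcyl : IsOpen {w : ℕ → A | ∀ m ≤ n, w m = u m} :=
    isOpen_set_pi (finite_Iic n) fun m _ => isOpen_discrete {u m}
  obtain ⟨y, ⟨hyu, hyα⟩, hyY⟩ := mem_closure_iff.mp (hdense hvX) _
    (hcyl.inter (isOpen_setOf_notMem_Gamma1 hX α)) ⟨hvu, hvα⟩
  exact ⟨y, hyY, hyu, hyα⟩

end Gamma1

lemma tendsto_atTop_of_forall_le_eq {A : Type*} [TopologicalSpace A] {y : ℕ → ℕ → A}
    {u : ℕ → A} (h : ∀ n, ∀ m ≤ n, y n m = u m) : Tendsto y atTop (𝓝 u) :=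
  tendsto_pi_nhds.mpr fun m => tendsto_nhds_of_eventually_eq <|
    (eventually_ge_atTop m).mono fun n hn => h n m hn

lemma apply_eq_zero_of_sum_indicator_eq {A : Type*} [Fintype A] {s t : Set A} {f : A → ℝ}
    (hst : s ⊆ t) (hf : ∀ σ ∈ t, 0 ≤ f σ) (hsum : ∑ σ, t.indicator f σ = ∑ σ, s.indicator f σ)
    {α : A} (hα : α ∈ t \ s) : f α = 0 := by
  have hzero : ∑ σ, (t \ s).indicator f σ = 0 := by
    simp only [indicator_sdiff hst, Pi.sub_apply, Finset.sum_sub_distrib, hsum, sub_self]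
  have hnonneg : ∀ σ ∈ Finset.univ, 0 ≤ (t \ s).indicator f σ :=
    fun σ _ => indicator_nonneg (fun σ hσ => hf σ hσ.1) σ
  simpa [indicator_of_mem hα] using
    (Finset.sum_eq_zero_iff_of_nonneg hnonneg).mp hzero α (Finset.mem_univ α)

section Limit

variable {A : Type*} [Fintype A] [TopologicalSpace A] {X : Set (ℤ → A)} {Y : Set (ℕ → A)}
  {g : (ℕ → A) → A → ℝ} {u : ℕ → A}

lemma sum_indicator_eq_one_of_tendsto
    (hcont : ContinuousOn (fun p : (ℕ → A) × A => g p.1 p.2)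
      {p : (ℕ → A) × A | p.1 ∈ Y ∧ p.2 ∈ Gamma1 X p.1})
    (hsum : ∀ v ∈ Y, ∑ σ : A, (Gamma1 X v).indicator (g v) σ = 1) (hu : u ∈ Y)
    {Γ : Set A} (hΓu : Γ ⊆ Gamma1 X u) {ι : Type*} {l : Filter ι} [l.NeBot]
    {y : ι → ℕ → A} (hy : Tendsto y l (𝓝 u)) (hyY : ∀ᶠ i in l, y i ∈ Y)
    (hyΓ : ∀ᶠ i in l, Gamma1 X (y i) = Γ) :
    ∑ σ, Γ.indicator (g u) σ = 1 := by
  have hlim : Tendsto (fun i => ∑ σ, Γ.indicator (g (y i)) σ) l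
      (𝓝 (∑ σ, Γ.indicator (g u) σ)) := by
    refine tendsto_finsetSum _ fun σ _ => ?_
    by_cases hσ : σ ∈ Γ
    · simp only [indicator_of_mem hσ]
      refine (hcont (u, σ) ⟨hu, hΓu hσ⟩).tendsto.comp (tendsto_nhdsWithin_iff.mpr
        ⟨hy.prodMk_nhds tendsto_const_nhds, ?_⟩)
      filter_upwards [hyY, hyΓ] with i hi hiΓ
      exact ⟨hi, hiΓ ▸ hσ⟩
    · simp only [indicator_of_notMem hσ, tendsto_const_nhds]
  refine tendsto_nhds_unique hlim (tendsto_const_nhds.congr' ?_)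
  filter_upwards [hyY, hyΓ] with i hi hiΓ
  rw [← hiΓ, hsum _ hi]

lemma apply_eq_zero_of_tendsto_of_notMem_Gamma1 [T2Space A] (hX : IsClosed X)
    (hcont : ContinuousOn (fun p : (ℕ → A) × A => g p.1 p.2)
      {p : (ℕ → A) × A | p.1 ∈ Y ∧ p.2 ∈ Gamma1 X p.1})
    (hsum : ∀ v ∈ Y, ∑ σ : A, (Gamma1 X v).indicator (g v) σ = 1) (hu : u ∈ Y)
    (hnonneg : ∀ σ ∈ Gamma1 X u, 0 ≤ g u σ) {y : ℕ → ℕ → A} (hy : Tendsto y atTop (𝓝 u))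
    (hyY : ∀ n, y n ∈ Y) {α : A} (hαu : α ∈ Gamma1 X u) (hyα : ∀ n, α ∉ Gamma1 X (y n)) :
    g u α = 0 := by
  obtain ⟨Γ, hΓ⟩ := Finite.exists_infinite_fiber fun n => Gamma1 X (y n)
  have hfreq : ∃ᶠ n in atTop, Gamma1 X (y n) = Γ :=
    Nat.frequently_atTop_iff_infinite.mpr (infinite_coe_iff.mp hΓ)
  set l := atTop ⊓ 𝓟 {n | Gamma1 X (y n) = Γ}
  have : l.NeBot := frequently_iff_neBot.mp hfreq
  have hyl : Tendsto y l (𝓝 u) := hy.mono_left inf_le_left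
  have hlΓ : ∀ᶠ n in l, Gamma1 X (y n) = Γ := mem_inf_of_right (mem_principal_self _)
  have hΓu : Γ ⊆ Gamma1 X u := fun σ hσ =>
    (isClosed_setOf_mem_Gamma1 hX).mem_of_tendsto (hyl.prodMk_nhds tendsto_const_nhds)
      (hlΓ.mono fun n hn => show σ ∈ Gamma1 X (y n) from hn ▸ hσ)
  obtain ⟨n, hn⟩ := hlΓ.exists
  have hαΓ : α ∉ Γ := hn ▸ hyα n
  exact apply_eq_zero_of_sum_indicator_eq hΓu hnonneg ((hsum u hu).trans
    (sum_indicator_eq_one_of_tendsto hcont hsum hu hΓu hyl (.of_forall hyY) hlΓ).symm)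
    ⟨hαu, hαΓ⟩

end Limit

theorem stmt0_general {A : Type*} [Fintype A] [TopologicalSpace A] [DiscreteTopology A]
    (X : Set (ℤ → A)) (hX : IsSubshift X)
    (Y : Set (ℕ → A)) (hdense : Xminus X ⊆ closure Y)
    (g : (ℕ → A) → A → ℝ)
    (hcont : ContinuousOn (fun p : (ℕ → A) × A => g p.1 p.2)
      {p : (ℕ → A) × A | p.1 ∈ Y ∧ p.2 ∈ Gamma1 X p.1})
    (hrange : ∀ u ∈ Y, ∀ σ ∈ Gamma1 X u, g u σ ∈ Set.Icc (0 : ℝ) 1)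
    (hsum : ∀ u ∈ Y, ∑ σ : A, (Gamma1 X u).indicator (g u) σ = 1)
    (u : ℕ → A) (hu : u ∈ Y) (α : A) (hα : α ∈ Gamma1 X u \ Delta1 X u) :
    g u α = 0 := by
  obtain ⟨hαu, hαΔ⟩ := hα
  have hy : ∀ n, ∃ y ∈ Y, (∀ m ≤ n, y m = u m) ∧ α ∉ Gamma1 X y := fun n =>
    exists_mem_notMem_Gamma1_of_notMem_omega1 hX.2.1 hdense fun h => hαΔ (mem_iUnion_of_mem n h)
  choose y hyY hyu hyα using hy
  exact apply_eq_zero_of_tendsto_of_notMem_Gamma1 hX.2.1 hcont hsum hu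
    (fun σ hσ => (hrange u hu σ hσ).1) (tendsto_atTop_of_forall_le_eq hyu) hyY hαu hyα

/-- Lemma 2.1.  If `Y⁻ ⊆ X⁻` is dense in `X⁻` and `g`, defined on
`{(y⁻,σ) : y⁻ ∈ Y⁻, σ ∈ Γ₁⁺(y⁻)}`, is continuous with values in `[0,1]` and satisfies
`∑_{σ ∈ Γ₁⁺(y⁻)} g (y⁻,σ) = 1` for all `y⁻ ∈ Y⁻`, then `g (x⁻,α) = 0` for every
`x⁻ ∈ Y⁻` and `α ∈ Γ₁⁺(x⁻) \ Δ₁⁺(x⁻)`. -/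
theorem stmt0 {A : Type*} [Fintype A] [Nonempty A] [TopologicalSpace A] [DiscreteTopology A]
    (X : Set (ℤ → A)) (hX : IsSubshift X)
    (Y : Set (ℕ → A)) (hYX : Y ⊆ Xminus X) (hdense : Xminus X ⊆ closure Y)
    (g : (ℕ → A) → A → ℝ)
    (hcont : ContinuousOn (fun p : (ℕ → A) × A => g p.1 p.2)
      {p : (ℕ → A) × A | p.1 ∈ Y ∧ p.2 ∈ Gamma1 X p.1})
    (hrange : ∀ u ∈ Y, ∀ σ ∈ Gamma1 X u, g u σ ∈ Set.Icc (0 : ℝ) 1)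
    (hsum : ∀ u ∈ Y, ∑ σ : A, (Gamma1 X u).indicator (g u) σ = 1)
    (u : ℕ → A) (hu : u ∈ Y) (α : A) (hα : α ∈ Gamma1 X u \ Delta1 X u) :
    g u α = 0 :=
  stmt0_general X hX Y hdense g hcont hrange hsum u hu α hα
end

section
/- If a subshift X ⊆ Σ^ℤ has a strictly positive g-function, i.e. a g-function g with g(x⁻,σ) > 0 for every x⁻ ∈ X⁻ and every σ ∈ Γ₁⁺(x⁻), then X is of finite type. -/
open Set Filter Topology

/-- `X` is of finite type: it is defined by excluding finitely many words. -/
def IsFiniteType {A : Type*} (X : Set (ℤ → A)) : Prop :=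
  ∃ F : Set (List A), F.Finite ∧ X = {x : ℤ → A | ∀ w ∈ F, ¬Occurs w x}

/-! Positivity and continuity of `g` make the follower set `Γ₁⁺(x⁻)` locally constant on `X⁻`:
if rays with follower set `Γ₀` accumulate at `x⁻`, then `Γ₀ ⊆ Γ₁⁺(x⁻)` by closedness and the
identities `∑_{σ ∈ Γ₀} g(·, σ) = 1` pass to the limit, which forces `Γ₀ = Γ₁⁺(x⁻)` since
`g(x⁻, ·)` is positive on `Γ₁⁺(x⁻)` and sums to `1` there. By compactness of `X⁻` the follower
set depends only on the last `N` letters of a ray, so two points of `X` agreeing on `N`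
consecutive coordinates can be glued there. Hence a point all of whose words of length `N + 1`
are admissible is approximated by points of `X` on arbitrarily long windows, and `X` is defined
by forbidding the finitely many non-admissible words of length `N + 1`. -/

lemma eq_of_subset_of_sum_indicator_eq {ι : Type*} [Fintype ι] {s t : Set ι} {f : ι → ℝ}
    (hst : s ⊆ t) (hf : ∀ i ∈ t, 0 < f i) (h : ∑ i, s.indicator f i = ∑ i, t.indicator f i) :
    s = t := by
  by_contra hne
  obtain ⟨i, hit, his⟩ := Set.exists_of_ssubset (hst.ssubset_of_ne hne)
  refine h.not_lt (Finset.sum_lt_sum (fun j _ => ?_) ⟨i, Finset.mem_univ _, ?_⟩)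
  · by_cases hjs : j ∈ s
    · simp [hjs, hst hjs]
    · by_cases hjt : j ∈ t
      · simp [hjs, hjt, (hf j hjt).le]
      · simp [hjs, hjt]
  · simp [his, hit, hf i hit]

lemma eventually_nhdsWithin_eq_of_isClosed_fiber {α β : Type*} [TopologicalSpace α] [Finite β]
    {K : Set α} {f : α → β} (hf : ∀ b, IsClosed {a | a ∈ K ∧ f a = b}) (a : α) :
    ∀ᶠ x in 𝓝[K] a, f x = f a := by
  have : ∀ b, ∀ᶠ x in 𝓝 a, b ≠ f a → x ∉ {a | a ∈ K ∧ f a = b} := fun b => by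
    by_cases hb : b = f a
    · simp [hb]
    · filter_upwards [(hf b).isOpen_compl.mem_nhds fun h => hb h.2.symm] with x hx _ using hx
  filter_upwards [mem_nhdsWithin_of_mem_nhds (eventually_all.2 this), self_mem_nhdsWithin]
    with x hx hxK
  by_contra hne
  exact hx _ hne ⟨hxK, rfl⟩

open PiNat in
lemma IsCompact.exists_eq_of_forall_lt_eq {A β : Type*} [TopologicalSpace A]
    [DiscreteTopology A] {K : Set (ℕ → A)} (hK : IsCompact K) {f : (ℕ → A) → β}
    (hf : ∀ u ∈ K, ∀ᶠ v in 𝓝[K] u, f v = f u) :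
    ∃ N, ∀ u ∈ K, ∀ v ∈ K, (∀ n < N, u n = v n) → f u = f v := by
  have hcyl : ∀ u ∈ K, ∃ n, ∀ v ∈ K, v ∈ cylinder u n → f v = f u := by
    intro u hu
    obtain ⟨s, hs, hsf⟩ := mem_nhdsWithin_iff_exists_mem_nhds_inter.1 (hf u hu)
    obtain ⟨_, ⟨w, n, rfl⟩, hu', hsub⟩ := (isTopologicalBasis_cylinders _).mem_nhds_iff.1 hs
    rw [← mem_cylinder_iff_eq.1 hu'] at hsub
    exact ⟨n, fun v hv hvu => hsf ⟨hsub hvu, hv⟩⟩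
  choose! n hn using hcyl
  obtain ⟨t, htK, hcover⟩ := hK.elim_nhdsWithin_subcover (fun u => cylinder u (n u))
    fun u _ => mem_nhdsWithin_of_mem_nhds <|
      (isOpen_cylinder _ _ _).mem_nhds (self_mem_cylinder _ _)
  refine ⟨t.sup n, fun u hu v hv huv => ?_⟩
  obtain ⟨w, hw, huw⟩ := mem_iUnion₂.1 (hcover hu)
  have hvw : v ∈ cylinder w (n w) := fun i hi =>
    (huv i (hi.trans_le (Finset.le_sup hw))).symm.trans (huw i hi)
  rw [hn w (htK w hw) u hu huw, hn w (htK w hw) v hv hvw]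

lemma IsClosed.mem_of_forall_exists_eqOn {A : Type*} [TopologicalSpace A] {X : Set (ℤ → A)}
    (hX : IsClosed X) {x : ℤ → A} (h : ∀ m : ℕ, ∃ y ∈ X, EqOn y x (Icc (-m : ℤ) m)) : x ∈ X := by
  choose y hyX hyx using h
  refine hX.mem_of_tendsto (b := atTop)
    (tendsto_pi_nhds.2 fun i => tendsto_nhds_of_eventually_eq ?_) (Eventually.of_forall hyX)
  filter_upwards [eventually_ge_atTop i.natAbs] with m hm
  exact hyx m ⟨by omega, by omega⟩

lemma occurs_ofFn {A : Type*} (x : ℤ → A) (k : ℤ) (L : ℕ) :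
    Occurs (List.ofFn fun j : Fin L => x (k + j)) x :=
  ⟨k, fun j => by simp⟩

section Subshift

variable {A : Type*} [TopologicalSpace A] {X : Set (ℤ → A)}

lemma IsSubshift.shiftMap_mem_iff (hX : IsSubshift X) {x : ℤ → A} : shiftMap x ∈ X ↔ x ∈ X := by
  refine ⟨fun h => ?_, fun h => hX.2.2 ▸ mem_image_of_mem _ h⟩
  obtain ⟨y, hy, hyx⟩ := (hX.2.2.symm ▸ h : shiftMap x ∈ shiftMap '' X)
  have : y = x := funext fun i => by simpa [shiftMap] using congrFun hyx (i - 1)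
  exact this ▸ hy

lemma IsSubshift.comp_add_mem (hX : IsSubshift X) {x : ℤ → A} (hx : x ∈ X) (n : ℤ) :
    (fun i => x (i + n)) ∈ X := by
  induction n using Int.induction_on with
  | zero => simpa using hx
  | succ n ih =>
    have : (fun i => x (i + (n + 1))) = shiftMap fun i => x (i + n) := by
      funext i; simp only [shiftMap]; ring_nf
    exact this ▸ hX.shiftMap_mem_iff.2 ih
  | pred n ih =>
    have : shiftMap (fun i => x (i + (-n - 1))) = fun i => x (i + -n) := by
      funext i; simp only [shiftMap]; ring_nf
    exact hX.shiftMap_mem_iff.1 (this ▸ ih)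

lemma IsSubshift.exists_eqOn_Ico_of_admissible (hX : IsSubshift X) {x : ℤ → A} {k : ℤ} {L : ℕ}
    (h : Admissible X (List.ofFn fun j : Fin L => x (k + j))) :
    ∃ y ∈ X, EqOn y x (Ico k (k + L)) := by
  obtain ⟨y, hy, i, hi⟩ := h
  refine ⟨fun t => y (t + (i - k)), hX.comp_add_mem hy _, fun t ⟨htk, htL⟩ => ?_⟩
  have := hi ⟨(t - k).toNat, by simp; omega⟩
  simp only [List.get_ofFn] at this
  convert this using 2 <;> simp <;> omega

end Subshift

def IsMarkov {A : Type*} (X : Set (ℤ → A)) (N : ℕ) : Prop :=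
  ∀ x ∈ X, ∀ y ∈ X, ∀ p : ℤ, EqOn x y (Ioc (p - N) p) →
    ∃ w ∈ X, EqOn w x (Iic p) ∧ w (p + 1) = y (p + 1)

section Markov

variable {A : Type*} {X : Set (ℤ → A)} {N : ℕ}

lemma IsMarkov.exists_eqOn_Ico (hM : IsMarkov X N) {x : ℤ → A}
    (hx : ∀ k : ℤ, ∃ y ∈ X, EqOn y x (Ico k (k + (N + 1)))) (k : ℤ) (L : ℕ) :
    ∃ y ∈ X, EqOn y x (Ico k (k + (N + 1 + L))) := by
  induction L with
  | zero => simpa using hx k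
  | succ L ih =>
    obtain ⟨y, hy, hyx⟩ := ih
    obtain ⟨z, hz, hzx⟩ := hx (k + L + 1)
    obtain ⟨w, hw, hwy, hwz⟩ := hM y hy z hz (k + N + L) fun i ⟨hi₁, hi₂⟩ =>
      (hyx ⟨by omega, by omega⟩).trans (hzx ⟨by omega, by omega⟩).symm
    refine ⟨w, hw, fun i ⟨hi₁, hi₂⟩ => ?_⟩
    rcases (show i ≤ k + N + L ∨ i = k + N + L + 1 by omega) with hi | rfl
    · exact (hwy hi).trans (hyx ⟨hi₁, by omega⟩)
    · exact hwz.trans (hzx ⟨by omega, by omega⟩)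

lemma IsMarkov.isFiniteType [TopologicalSpace A] [Finite A] (hX : IsSubshift X)
    (hM : IsMarkov X N) : IsFiniteType X := by
  refine ⟨{w | w.length = N + 1 ∧ ¬Admissible X w},
    (List.finite_length_eq A (N + 1)).subset fun w hw => hw.1, ?_⟩
  ext x
  refine ⟨fun hx w hw hocc => hw.2 ⟨x, hx, hocc⟩, fun hx => ?_⟩
  have hwindow (k : ℤ) : ∃ y ∈ X, EqOn y x (Ico k (k + (N + 1))) := by
    refine hX.exists_eqOn_Ico_of_admissible (L := N + 1) (not_not.1 fun h => ?_)
    exact hx _ ⟨by simp, h⟩ (occurs_ofFn x k _)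
  refine hX.2.1.mem_of_forall_exists_eqOn fun m => ?_
  obtain ⟨y, hy, hyx⟩ := hM.exists_eqOn_Ico hwindow (-m) (2 * m)
  exact ⟨y, hy, hyx.mono (Icc_subset_Ico_right (by omega))⟩

end Markov

def leftRay {A : Type*} (x : ℤ → A) : ℕ → A := fun n => x (-n)

section GFunction

variable {A : Type*} {X : Set (ℤ → A)}

lemma xminus_eq_image : Xminus X = leftRay '' X := by
  ext u
  constructor
  · rintro ⟨x, hx, hxu⟩
    exact ⟨x, hx, funext fun n => (hxu n).symm⟩
  · rintro ⟨x, hx, rfl⟩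
    exact ⟨x, hx, fun _ => rfl⟩

lemma setOf_mem_gamma1_eq_image (σ : A) :
    {u | σ ∈ Gamma1 X u} = leftRay '' (X ∩ {x | x 1 = σ}) := by
  ext u
  constructor
  · rintro ⟨x, hx, hxu, hx1⟩
    exact ⟨x, ⟨hx, hx1⟩, funext hxu⟩
  · rintro ⟨x, ⟨hx, hx1⟩, rfl⟩
    exact ⟨x, hx, fun _ => rfl, hx1⟩

variable [TopologicalSpace A]

lemma continuous_leftRay : Continuous (leftRay (A := A)) :=
  continuous_pi fun _ => continuous_apply _

lemma IsGFunction.continuousOn_apply [Fintype A] {g : (ℕ → A) → A → ℝ} (hg : IsGFunction X g)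
    (σ : A) : ContinuousOn (g · σ) {u | u ∈ Xminus X ∧ σ ∈ Gamma1 X u} :=
  hg.1.comp (continuous_id.prodMk continuous_const).continuousOn fun _ hu => hu

variable [Finite A]

lemma isCompact_xminus (hX : IsClosed X) : IsCompact (Xminus X) :=
  xminus_eq_image (X := X) ▸ hX.isCompact.image continuous_leftRay

variable [DiscreteTopology A]

lemma isClosed_setOf_mem_gamma1 (hX : IsClosed X) (σ : A) : IsClosed {u | σ ∈ Gamma1 X u} :=
  setOf_mem_gamma1_eq_image (X := X) σ ▸
    ((hX.inter (isClosed_eq (continuous_apply 1) continuous_const)).isCompact.image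
      continuous_leftRay).isClosed

end GFunction

section PositiveGFunction

variable {A : Type*} [Fintype A] [TopologicalSpace A] [DiscreteTopology A] {X : Set (ℤ → A)}
  {g : (ℕ → A) → A → ℝ}

lemma isClosed_setOf_gamma1_eq (hX : IsClosed X) (hg : IsGFunction X g)
    (hpos : ∀ u ∈ Xminus X, ∀ σ ∈ Gamma1 X u, 0 < g u σ) (Γ₀ : Set A) :
    IsClosed {u | u ∈ Xminus X ∧ Gamma1 X u = Γ₀} := by
  set F := {u | u ∈ Xminus X ∧ Gamma1 X u = Γ₀}
  refine isClosed_of_closure_subset fun u hu => ?_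
  have hX' : u ∈ Xminus X :=
    closure_minimal (fun v hv => hv.1) (isCompact_xminus hX).isClosed hu
  have hsub : Γ₀ ⊆ Gamma1 X u := fun σ hσ =>
    closure_minimal (fun v (hv : v ∈ F) => show σ ∈ Gamma1 X v from hv.2 ▸ hσ)
      (isClosed_setOf_mem_gamma1 hX σ) hu
  have : (𝓝[F] u).NeBot := mem_closure_iff_nhdsWithin_neBot.1 hu
  have hlim : Tendsto (fun v => ∑ σ, Γ₀.indicator (g v) σ) (𝓝[F] u)
      (𝓝 (∑ σ, Γ₀.indicator (g u) σ)) := by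
    refine tendsto_finsetSum _ fun σ _ => ?_
    by_cases hσ : σ ∈ Γ₀
    · simp only [Set.indicator_of_mem hσ]
      exact ((hg.continuousOn_apply σ u ⟨hX', hsub hσ⟩).mono
        fun v (hv : v ∈ F) => ⟨hv.1, hv.2 ▸ hσ⟩).tendsto
    · simpa only [Set.indicator_of_notMem hσ] using tendsto_const_nhds
  have hone : ∀ᶠ v in 𝓝[F] u, ∑ σ, Γ₀.indicator (g v) σ = 1 := by
    filter_upwards [self_mem_nhdsWithin] with v hv
    exact hv.2 ▸ hg.2.2 v hv.1
  refine ⟨hX', eq_of_subset_of_sum_indicator_eq hsub (hpos u hX') ?_ |>.symm⟩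
  rw [hg.2.2 u hX']
  exact tendsto_nhds_unique hlim (tendsto_const_nhds.congr' (hone.mono fun _ h => h.symm))

lemma exists_gamma1_eq_of_forall_lt_eq (hX : IsClosed X) (hg : IsGFunction X g)
    (hpos : ∀ u ∈ Xminus X, ∀ σ ∈ Gamma1 X u, 0 < g u σ) :
    ∃ N, ∀ u ∈ Xminus X, ∀ v ∈ Xminus X, (∀ n < N, u n = v n) → Gamma1 X u = Gamma1 X v :=
  (isCompact_xminus hX).exists_eq_of_forall_lt_eq fun u _ =>
    eventually_nhdsWithin_eq_of_isClosed_fiber (isClosed_setOf_gamma1_eq hX hg hpos) u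

end PositiveGFunction

lemma isMarkov_of_gamma1_eq {A : Type*} [TopologicalSpace A] {X : Set (ℤ → A)} {N : ℕ}
    (hX : IsSubshift X)
    (hN : ∀ u ∈ Xminus X, ∀ v ∈ Xminus X, (∀ n < N, u n = v n) → Gamma1 X u = Gamma1 X v) :
    IsMarkov X N := by
  intro x hx y hy p hxy
  have hx' := hX.comp_add_mem hx p
  have hy' := hX.comp_add_mem hy p
  have hmem : y (p + 1) ∈ Gamma1 X fun n : ℕ => x (-n + p) := by
    rw [hN (fun n : ℕ => x (-n + p)) ⟨_, hx', fun _ => rfl⟩ (fun n : ℕ => y (-n + p))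
      ⟨_, hy', fun _ => rfl⟩ fun n hn => hxy ⟨by omega, by omega⟩]
    exact ⟨_, hy', fun _ => rfl, by rw [add_comm]⟩
  obtain ⟨w, hw, hwx, hw1⟩ := hmem
  refine ⟨fun i => w (i - p), hX.comp_add_mem hw (-p), fun i (hi : i ≤ p) => ?_,
    by simpa using hw1⟩
  convert hwx (p - i).toNat using 2 <;> omega

theorem stmt1_general {A : Type*} [Fintype A] [TopologicalSpace A] [DiscreteTopology A]
    (X : Set (ℤ → A)) (hX : IsSubshift X)
    (h : ∃ g : (ℕ → A) → A → ℝ, IsGFunction X g ∧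
      ∀ u ∈ Xminus X, ∀ σ ∈ Gamma1 X u, 0 < g u σ) :
    IsFiniteType X := by
  obtain ⟨g, hg, hpos⟩ := h
  obtain ⟨N, hN⟩ := exists_gamma1_eq_of_forall_lt_eq hX.2.1 hg hpos
  exact (isMarkov_of_gamma1_eq hX hN).isFiniteType hX

/-- Corollary 2.2.  A subshift with a strictly positive g-function is
of finite type. -/
theorem stmt1 {A : Type*} [Fintype A] [Nonempty A] [TopologicalSpace A] [DiscreteTopology A]
    (X : Set (ℤ → A)) (hX : IsSubshift X)
    (h : ∃ g : (ℕ → A) → A → ℝ, IsGFunction X g ∧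
      ∀ u ∈ Xminus X, ∀ σ ∈ Gamma1 X u, 0 < g u σ) :
    IsFiniteType X :=
  stmt1_general X hX h
end

section
/- Let X ⊆ Σ^ℤ be a subshift such that the set D⁻ = {x⁻ ∈ X⁻ : Δ₁⁺(x⁻) ≠ ∅} is nonempty. Then there exists a continuous map g : D⁻ × Σ → [0,1] such that for every x⁻ ∈ D⁻: g(x⁻,σ) = 0 for all σ ∉ Δ₁⁺(x⁻), g(x⁻,σ) > 0 for all σ ∈ Δ₁⁺(x⁻), and Σ_{σ ∈ Σ} g(x⁻,σ) = 1. -/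
open Set Filter Topology

/-! The weight `w(x⁻, σ) = ∑ₙ 2⁻ⁿ [σ ∈ ω₁⁺(x_{-n} … x_0)]` is positive exactly when
`σ ∈ Δ₁⁺(x⁻)`, and it is continuous because the `n`-th term depends only on the coordinates
`x_{-n}, …, x_0` and `σ` while the tail is uniformly small. Normalizing `w` by its sum over the
alphabet, which is positive on `D⁻`, gives `g`. -/

section GeomWeight

variable {β : Type*}

noncomputable def geomWeight (s : ℕ → Set β) (b : β) : ℝ :=
  ∑' n, (s n).indicator (fun _ => (1 / 2 : ℝ) ^ n) b

variable {s : ℕ → Set β}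

lemma norm_indicator_geom_le (n : ℕ) (b : β) :
    ‖(s n).indicator (fun _ => (1 / 2 : ℝ) ^ n) b‖ ≤ (1 / 2) ^ n := by
  by_cases h : b ∈ s n <;> simp [h]

lemma summable_geomWeight (b : β) :
    Summable fun n => (s n).indicator (fun _ => (1 / 2 : ℝ) ^ n) b :=
  Summable.of_norm_bounded summable_geometric_two fun n => norm_indicator_geom_le n b

lemma indicator_geom_nonneg (n : ℕ) (b : β) :
    0 ≤ (s n).indicator (fun _ => (1 / 2 : ℝ) ^ n) b :=
  indicator_nonneg (fun _ _ => by positivity) b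

lemma geomWeight_nonneg (b : β) : 0 ≤ geomWeight s b :=
  tsum_nonneg fun n => indicator_geom_nonneg n b

lemma geomWeight_pos_iff {b : β} : 0 < geomWeight s b ↔ b ∈ ⋃ n, s n := by
  constructor
  · intro hpos
    by_contra hb
    simp only [mem_iUnion, not_exists] at hb
    simp [geomWeight, hb] at hpos
  · intro hb
    obtain ⟨n, hn⟩ := mem_iUnion.1 hb
    exact (summable_geomWeight b).tsum_pos (fun m => indicator_geom_nonneg m b) n
      (by simp [hn])

lemma continuous_geomWeight [TopologicalSpace β] (hs : ∀ n, IsClopen (s n)) :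
    Continuous (geomWeight s) :=
  continuous_tsum (fun n => (hs n).continuous_indicator continuous_const) summable_geometric_two
    norm_indicator_geom_le

end GeomWeight

section Omega1Graph

variable {A : Type*}

def omega1Graph (X : Set (ℤ → A)) (n : ℕ) : Set ((ℕ → A) × A) :=
  {p | p.2 ∈ omega1 X (lastWord p.1 n)}

lemma isClopen_omega1Graph [TopologicalSpace A] [DiscreteTopology A] (X : Set (ℤ → A))
    (n : ℕ) : IsClopen (omega1Graph X n) := by
  have hcont : Continuous fun p : (ℕ → A) × A =>
      ((fun j : Fin (n + 1) => p.1 (n - (j : ℕ)), p.2) : (Fin (n + 1) → A) × A) :=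
    (continuous_pi fun j => (continuous_apply _).comp continuous_fst).prodMk continuous_snd
  exact (isClopen_discrete {q : (Fin (n + 1) → A) × A | q.2 ∈ omega1 X (List.ofFn q.1)}).preimage
    hcont

lemma mem_iUnion_omega1Graph {X : Set (ℤ → A)} {u : ℕ → A} {σ : A} :
    (u, σ) ∈ ⋃ n, omega1Graph X n ↔ σ ∈ Delta1 X u := by
  simp [omega1Graph, Delta1]

end Omega1Graph

theorem stmt2_general {A : Type*} [Fintype A] [TopologicalSpace A] [DiscreteTopology A]
    (X : Set (ℤ → A)) :
    ∃ g : (ℕ → A) → A → ℝ,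
      ContinuousOn (fun p : (ℕ → A) × A => g p.1 p.2)
        {p : (ℕ → A) × A | p.1 ∈ Xminus X ∧ (Delta1 X p.1).Nonempty} ∧
      ∀ u, u ∈ Xminus X → (Delta1 X u).Nonempty →
        (∀ σ : A, g u σ ∈ Set.Icc (0 : ℝ) 1) ∧
        (∀ σ ∉ Delta1 X u, g u σ = 0) ∧
        (∀ σ ∈ Delta1 X u, 0 < g u σ) ∧
        ∑ σ : A, g u σ = 1 := by
  set w : (ℕ → A) × A → ℝ := geomWeight (omega1Graph X)
  have hw_cont : Continuous w := continuous_geomWeight (isClopen_omega1Graph X)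
  have hw_nonneg (p) : 0 ≤ w p := geomWeight_nonneg p
  have hw_pos (u σ) : 0 < w (u, σ) ↔ σ ∈ Delta1 X u :=
    geomWeight_pos_iff.trans mem_iUnion_omega1Graph
  have hZ_pos (u) (hu : (Delta1 X u).Nonempty) : 0 < ∑ τ, w (u, τ) := by
    obtain ⟨σ, hσ⟩ := hu
    exact Finset.sum_pos' (fun τ _ => hw_nonneg _) ⟨σ, Finset.mem_univ _, (hw_pos u σ).2 hσ⟩
  refine ⟨fun u σ => w (u, σ) / ∑ τ, w (u, τ), ?_, fun u _ hu => ?_⟩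
  · have hZ_cont : Continuous fun p : (ℕ → A) × A => ∑ τ, w (p.1, τ) :=
      continuous_finsetSum _ fun τ _ => hw_cont.comp (continuous_fst.prodMk continuous_const)
    exact hw_cont.continuousOn.div hZ_cont.continuousOn fun p hp => (hZ_pos p.1 hp.2).ne'
  have hZ := hZ_pos u hu
  refine ⟨fun σ => ⟨div_nonneg (hw_nonneg _) hZ.le, ?_⟩, fun σ hσ => ?_,
    fun σ hσ => div_pos ((hw_pos u σ).2 hσ) hZ, by rw [← Finset.sum_div, div_self hZ.ne']⟩
  · exact (div_le_one hZ).2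
      (Finset.single_le_sum (fun τ _ => hw_nonneg (u, τ)) (Finset.mem_univ σ))
  · show w (u, σ) / _ = 0
    rw [le_antisymm (not_lt.1 (mt (hw_pos u σ).1 hσ)) (hw_nonneg _), zero_div]

/-- Lemma 2.3.  If `D⁻ = {x⁻ ∈ X⁻ : Δ₁⁺(x⁻) ≠ ∅}` is nonempty, then
there is a continuous `g : D⁻ × Σ → [0,1]` vanishing exactly off `Δ₁⁺` and summing to
`1`. -/
theorem stmt2 {A : Type*} [Fintype A] [Nonempty A] [TopologicalSpace A] [DiscreteTopology A]
    (X : Set (ℤ → A)) (hX : IsSubshift X)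
    (hne : {u | u ∈ Xminus X ∧ (Delta1 X u).Nonempty}.Nonempty) :
    ∃ g : (ℕ → A) → A → ℝ,
      ContinuousOn (fun p : (ℕ → A) × A => g p.1 p.2)
        {p : (ℕ → A) × A | p.1 ∈ Xminus X ∧ (Delta1 X p.1).Nonempty} ∧
      ∀ u, u ∈ Xminus X → (Delta1 X u).Nonempty →
        (∀ σ : A, g u σ ∈ Set.Icc (0 : ℝ) 1) ∧
        (∀ σ ∉ Delta1 X u, g u σ = 0) ∧
        (∀ σ ∈ Delta1 X u, 0 < g u σ) ∧
        ∑ σ : A, g u σ = 1 :=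
  stmt2_general X
end

section
/- A subshift X ⊆ Σ^ℤ has property g if and only if X has a strict g-function. -/
open Set Filter Topology

/-- A strict g-function: a g-function that is positive on `Δ₁⁺`. -/
def IsStrictGFunction {A : Type*} [Fintype A] [TopologicalSpace A] (X : Set (ℤ → A))
    (g : (ℕ → A) → A → ℝ) : Prop :=
  IsGFunction X g ∧ ∀ u ∈ Xminus X, ∀ σ ∈ Delta1 X u, 0 < g u σ

/-!
For `⇒`, normalise the weight `∑ₙ 2⁻ⁿ [σ ∈ ω₁⁺(x_{-n} … x_0)]`. Its `n`-th term only sees the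
last `n + 1` letters, so it is continuous; it vanishes off `Δ₁⁺ ⊆ Γ₁⁺` and is positive on `Δ₁⁺`,
and property g makes the total weight positive.

For `⇐`, pick `σ` with `g(x⁻, σ) > 0`. As `X` is compact, `Γ₁⁺` has a closed graph, so the mass
that `g` gives to the letters other than `σ` is upper semicontinuous. The total mass being `1`,
`σ ∈ Γ₁⁺(y⁻)` for every `y⁻ ∈ X⁻` near `x⁻`, i.e. for every `y⁻` ending in a long enough final
word of `x⁻`; this says `σ ∈ Δ₁⁺(x⁻)`.
-/

section Rays
variable {A : Type*} {X : Set (ℤ → A)} {u : ℕ → A} {σ : A}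

lemma endsAtZero_lastWord_iff {x : ℤ → A} {n : ℕ} :
    EndsAtZero x (lastWord u n) ↔ ∀ m ≤ n, x (-(m : ℤ)) = u m := by
  simp only [EndsAtZero, Fin.forall_iff, List.get_eq_getElem, lastWord, List.length_ofFn,
    List.getElem_ofFn]
  constructor
  · intro h m hm
    have := h (n - m) (by omega)
    simp only [Nat.sub_sub_self hm] at this
    convert this using 2
    push_cast [Nat.cast_sub hm]
    ring
  · intro h j hj
    convert h (n - j) (by omega) using 2
    push_cast [Nat.cast_sub (by omega : j ≤ n)]
    ring

lemma eq_of_forall_neg_natCast_eq {x y : ℤ → A} (h : ∀ m : ℕ, y (-(m : ℤ)) = x (-(m : ℤ)))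
    {i : ℤ} (hi : i ≤ 0) : y i = x i := by
  simpa [Int.toNat_of_nonneg (neg_nonneg.2 hi)] using h (-i).toNat

/-- The paper's definition of `ω₁⁺`, through rays instead of points of `X`. -/
lemma mem_omega1_lastWord_iff {n : ℕ} :
    σ ∈ omega1 X (lastWord u n) ↔
      ∀ v ∈ Xminus X, (∀ m ≤ n, v m = u m) → σ ∈ Gamma1 X v := by
  constructor
  · rintro hσ v ⟨x, hxX, hxv⟩ hvu
    obtain ⟨x', hx'X, hx'x, hx'σ⟩ :=
      hσ x hxX (endsAtZero_lastWord_iff.2 fun m hm => (hxv m).symm.trans (hvu m hm))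
    refine ⟨x', hx'X, fun m => (hx'x _ (by omega)).trans (hxv m).symm, ?_⟩
    simpa using hx'σ 0
  · intro h x hxX hx
    obtain ⟨y, hyX, hyx, hyσ⟩ := h (fun m => x (-(m : ℤ))) ⟨x, hxX, fun _ => rfl⟩
      fun m hm => endsAtZero_lastWord_iff.1 hx m hm
    exact ⟨y, hyX, fun i hi => eq_of_forall_neg_natCast_eq hyx hi, fun j => by
      simp [Fin.fin_one_eq_zero j, hyσ]⟩

lemma Delta1_subset_Gamma1 (hu : u ∈ Xminus X) : Delta1 X u ⊆ Gamma1 X u := by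
  intro σ hσ
  obtain ⟨n, hn⟩ := Set.mem_iUnion.1 hσ
  exact mem_omega1_lastWord_iff.1 hn u hu fun _ _ => rfl

lemma mem_Xminus_of_mem_Gamma1 (h : σ ∈ Gamma1 X u) : u ∈ Xminus X := by
  obtain ⟨x, hxX, hxu, -⟩ := h
  exact ⟨x, hxX, fun n => (hxu n).symm⟩

variable [TopologicalSpace A]

lemma mem_Delta1_of_eventually_mem_Gamma1
    (h : ∀ᶠ v in 𝓝[Xminus X] u, σ ∈ Gamma1 X v) : σ ∈ Delta1 X u := by
  by_contra hσ
  have hv : ∀ n, ∃ v ∈ Xminus X, (∀ m ≤ n, v m = u m) ∧ σ ∉ Gamma1 X v := by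
    intro n
    by_contra! hn
    exact hσ (Set.mem_iUnion.2 ⟨n, mem_omega1_lastWord_iff.2 hn⟩)
  choose v hvX hvu hvσ using hv
  have hlim : Tendsto v atTop (𝓝[Xminus X] u) := by
    refine tendsto_nhdsWithin_iff.2 ⟨tendsto_pi_nhds.2 fun m => ?_, .of_forall hvX⟩
    exact tendsto_const_nhds.congr' ((eventually_ge_atTop m).mono fun n hn => (hvu n m hn).symm)
  obtain ⟨n, hn⟩ := (hlim.eventually h).exists
  exact hvσ n hn

end Rays

section Backward
variable {A : Type*} [TopologicalSpace A] [DiscreteTopology A] {X : Set (ℤ → A)}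
  {u : ℕ → A} {σ : A}

lemma isClosed_setOf_mem_Gamma1_s4 [Finite A] (hX : IsClosed X) (τ : A) :
    IsClosed {u | τ ∈ Gamma1 X u} := by
  have himage : {u | τ ∈ Gamma1 X u} =
      (fun x : ℤ → A => fun n : ℕ => x (-(n : ℤ))) '' (X ∩ {x | x 1 = τ}) := by
    ext u
    simp only [Gamma1, Set.mem_ofPred_eq, Set.mem_image, Set.mem_inter_iff, funext_iff]
    exact ⟨fun ⟨x, hxX, hxu, hxτ⟩ => ⟨x, ⟨hxX, hxτ⟩, hxu⟩,
      fun ⟨x, ⟨hxX, hxτ⟩, hxu⟩ => ⟨x, hxX, hxu, hxτ⟩⟩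
  rw [himage]
  refine ((hX.inter (isClosed_eq (continuous_apply 1) continuous_const)).isCompact.image ?_).isClosed
  exact continuous_pi fun n => continuous_apply _

variable [Fintype A] {g : (ℕ → A) → A → ℝ}

lemma upperSemicontinuousAt_indicator_Gamma1 (hX : IsClosed X) (hg : IsGFunction X g)
    (hu : u ∈ Xminus X) (τ : A) :
    UpperSemicontinuousAt (fun v => (Gamma1 X v).indicator (g v) τ) u := by
  rw [upperSemicontinuousAt_iff]
  intro y hy
  by_cases hτ : τ ∈ Gamma1 X u
  · rw [Set.indicator_of_mem hτ] at hy
    have hy0 : 0 < y := (hg.2.1 u hu τ hτ).1.trans_lt hy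
    have hnear : ∀ᶠ v in 𝓝 u, τ ∈ Gamma1 X v → g v τ < y := by
      have := (hg.1 (u, τ) ⟨hu, hτ⟩).eventually (gt_mem_nhds hy)
      rw [eventually_nhdsWithin_iff] at this
      exact ((Continuous.prodMk_left τ).tendsto u).eventually this
        |>.mono fun v hv hvτ => hv ⟨mem_Xminus_of_mem_Gamma1 hvτ, hvτ⟩
    filter_upwards [hnear] with v hv
    by_cases hvτ : τ ∈ Gamma1 X v
    · simpa [Set.indicator_of_mem hvτ] using hv hvτ
    · simpa [Set.indicator_of_notMem hvτ] using hy0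
  · rw [Set.indicator_of_notMem hτ] at hy
    filter_upwards [(isClosed_setOf_mem_Gamma1_s4 hX τ).isOpen_compl.mem_nhds hτ] with v hv
    rwa [Set.indicator_of_notMem (show τ ∉ Gamma1 X v from hv)]

lemma eventually_mem_Gamma1_of_pos (hX : IsClosed X) (hg : IsGFunction X g)
    (hu : u ∈ Xminus X) (hσ : 0 < (Gamma1 X u).indicator (g u) σ) :
    ∀ᶠ v in 𝓝[Xminus X] u, σ ∈ Gamma1 X v := by
  classical
  set rest := fun v => ∑ τ ∈ Finset.univ.erase σ, (Gamma1 X v).indicator (g v) τ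
  have hsplit : ∀ v ∈ Xminus X, (Gamma1 X v).indicator (g v) σ + rest v = 1 := fun v hv =>
    (Finset.add_sum_erase _ _ (Finset.mem_univ σ)).trans (hg.2.2 v hv)
  have hrest : ∀ᶠ v in 𝓝 u, rest v < 1 :=
    upperSemicontinuousAt_sum (fun τ _ => upperSemicontinuousAt_indicator_Gamma1 hX hg hu τ) 1
      (by linarith [hsplit u hu])
  filter_upwards [nhdsWithin_le_nhds hrest, self_mem_nhdsWithin] with v hv hvX
  refine Set.mem_of_indicator_ne_zero (f := g v) ?_
  linarith [hsplit v hvX]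

lemma propertyG_of_isGFunction (hX : IsClosed X) (hg : IsGFunction X g) : PropertyG X := by
  intro u hu
  obtain ⟨σ, -, hσ⟩ : ∃ σ ∈ Finset.univ, 0 < (Gamma1 X u).indicator (g u) σ :=
    Finset.exists_lt_of_sum_lt (f := fun _ => 0) (by simp [hg.2.2 u hu])
  exact ⟨σ, mem_Delta1_of_eventually_mem_Gamma1 (eventually_mem_Gamma1_of_pos hX hg hu hσ)⟩

end Backward

section Forward
variable {A : Type*} {X : Set (ℤ → A)} {u : ℕ → A} {σ : A}

noncomputable def omegaWeight (X : Set (ℤ → A)) (u : ℕ → A) (σ : A) : ℝ :=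
  ∑' n : ℕ, (omega1 X (lastWord u n)).indicator (fun _ => (1 / 2 : ℝ) ^ n) σ

lemma omegaWeight_term_nonneg (n : ℕ) :
    0 ≤ (omega1 X (lastWord u n)).indicator (fun _ => (1 / 2 : ℝ) ^ n) σ :=
  Set.indicator_nonneg (fun _ _ => by positivity) σ

lemma omegaWeight_term_le (n : ℕ) :
    (omega1 X (lastWord u n)).indicator (fun _ => (1 / 2 : ℝ) ^ n) σ ≤ (1 / 2 : ℝ) ^ n :=
  Set.indicator_le_self' (fun _ _ => by positivity) σ

lemma omegaWeight_nonneg : 0 ≤ omegaWeight X u σ :=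
  tsum_nonneg fun _ => omegaWeight_term_nonneg _

lemma omegaWeight_pos (hσ : σ ∈ Delta1 X u) : 0 < omegaWeight X u σ := by
  obtain ⟨n, hn⟩ := Set.mem_iUnion.1 hσ
  refine (summable_geometric_two.of_nonneg_of_le (fun _ => omegaWeight_term_nonneg _)
    fun _ => omegaWeight_term_le _).tsum_pos (fun _ => omegaWeight_term_nonneg _) n ?_
  rw [Set.indicator_of_mem hn]
  positivity

lemma omegaWeight_eq_zero (hσ : σ ∉ Delta1 X u) : omegaWeight X u σ = 0 :=
  (tsum_congr fun n => Set.indicator_of_notMem (fun hn => hσ (Set.mem_iUnion.2 ⟨n, hn⟩)) _).trans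
    tsum_zero

variable [TopologicalSpace A] [DiscreteTopology A]

lemma continuous_comp_lastWord {β : Type*} [TopologicalSpace β] (f : List A → A → β) (n : ℕ) :
    Continuous fun p : (ℕ → A) × A => f (lastWord p.1 n) p.2 := by
  have hwindow : Continuous fun p : (ℕ → A) × A => (fun j : Fin (n + 1) => p.1 (n - j), p.2) :=
    (continuous_pi fun j => (continuous_apply _).comp continuous_fst).prodMk continuous_snd
  exact (continuous_of_discreteTopology (f := fun q : (Fin (n + 1) → A) × A =>
    f (List.ofFn q.1) q.2)).comp hwindow

lemma continuous_omegaWeight : Continuous fun p : (ℕ → A) × A => omegaWeight X p.1 p.2 :=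
  continuous_tsum
    (fun n => continuous_comp_lastWord (fun w σ => (omega1 X w).indicator (fun _ => _) σ) n)
    summable_geometric_two fun n _ => by
      rw [Real.norm_of_nonneg (omegaWeight_term_nonneg n)]
      exact omegaWeight_term_le n

variable [Fintype A]

lemma continuous_sum_omegaWeight : Continuous fun u => ∑ τ, omegaWeight X u τ :=
  continuous_finsetSum _ fun _ _ =>
    continuous_omegaWeight.comp (continuous_id.prodMk continuous_const)

noncomputable def omegaGFunction (X : Set (ℤ → A)) (u : ℕ → A) (σ : A) : ℝ :=
  omegaWeight X u σ / ∑ τ, omegaWeight X u τ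

lemma isStrictGFunction_omegaGFunction (hG : PropertyG X) :
    IsStrictGFunction X (omegaGFunction X) := by
  have hle : ∀ u σ, omegaWeight X u σ ≤ ∑ τ, omegaWeight X u τ := fun u σ =>
    Finset.single_le_sum (f := omegaWeight X u) (fun _ _ => omegaWeight_nonneg)
      (Finset.mem_univ σ)
  have htotal : ∀ u ∈ Xminus X, 0 < ∑ τ, omegaWeight X u τ := fun u hu =>
    let ⟨τ, hτ⟩ := hG u hu
    (omegaWeight_pos hτ).trans_le (hle u τ)
  refine ⟨⟨?_, fun u hu σ _ => ?_, fun u hu => ?_⟩, fun u hu σ hσ => ?_⟩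
  · refine continuous_omegaWeight.continuousOn.div ?_ fun p hp => (htotal p.1 hp.1).ne'
    exact (continuous_sum_omegaWeight.comp continuous_fst).continuousOn
  · exact ⟨div_nonneg omegaWeight_nonneg (htotal u hu).le,
      div_le_one_of_le₀ (hle u σ) (htotal u hu).le⟩
  · have hsupp : ∀ σ, (Gamma1 X u).indicator (omegaGFunction X u) σ = omegaGFunction X u σ := by
      intro σ
      by_cases hσ : σ ∈ Gamma1 X u
      · exact Set.indicator_of_mem hσ _
      · have hΔ : σ ∉ Delta1 X u := fun h => hσ (Delta1_subset_Gamma1 hu h)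
        rw [Set.indicator_of_notMem hσ, omegaGFunction, omegaWeight_eq_zero hΔ, zero_div]
    simp only [hsupp, omegaGFunction]
    rw [← Finset.sum_div, div_self (htotal u hu).ne']
  · exact div_pos (omegaWeight_pos hσ) (htotal u hu)

end Forward

theorem stmt4_general {A : Type*} [Fintype A] [TopologicalSpace A] [DiscreteTopology A]
    (X : Set (ℤ → A)) (hX : IsSubshift X) :
    PropertyG X ↔ ∃ g : (ℕ → A) → A → ℝ, IsStrictGFunction X g :=
  ⟨fun hG => ⟨omegaGFunction X, isStrictGFunction_omegaGFunction hG⟩,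
    fun ⟨_, hg⟩ => propertyG_of_isGFunction hX.2.1 hg.1⟩

/-- Theorem 2.4, (b) ⟺ (c).  A subshift has property g if and only if
it has a strict g-function. -/
theorem stmt4 {A : Type*} [Fintype A] [Nonempty A] [TopologicalSpace A] [DiscreteTopology A]
    (X : Set (ℤ → A)) (hX : IsSubshift X) :
    PropertyG X ↔ ∃ g : (ℕ → A) → A → ℝ, IsStrictGFunction X g :=
  stmt4_general X hX
end

section
/- A subshift X ⊆ Σ^ℤ has property (D) if and only if for all admissible words a and c of X such that the concatenation ac is admissible, there exists an admissible word b of X such that ba is admissible and ac ∈ ω⁺(b). -/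
open Set Filter Topology

/-!
Write `OccursAt w x i` for "`x` carries `w` on the coordinates `i, …, i + |w| - 1`". By shift
invariance, `c ∈ ω⁺(b)` may be tested with `b` ending at any coordinate. In this form `ω⁺` is
monotone in the left context and composes: `u ∈ ω⁺(b)` and `v ∈ ω⁺(bu)` give `uv ∈ ω⁺(b)`.
Iterating (D) one letter at a time, each step lengthening the left context, therefore forces a
whole admissible word `ac` after some context `b`. Conversely `ac ∈ ω⁺(b)` gives
`c ∈ ω⁺(ba)`, which for a single letter `c` is (D).
-/

section SymbolicDynamics

variable {A : Type*}

theorem translate_mem {X : Set (ℤ → A)} (hS : shiftMap '' X = X) {x : ℤ → A} (hx : x ∈ X)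
    (m : ℤ) : (fun i => x (i + m)) ∈ X := by
  have shift_mem : ∀ y ∈ X, (fun i => y (i + 1)) ∈ X := fun y hy => hS ▸ Set.mem_image_of_mem _ hy
  have unshift_mem : ∀ y ∈ X, (fun i => y (i - 1)) ∈ X := by
    intro y hy
    obtain ⟨z, hz, rfl⟩ := hS.symm ▸ hy
    simpa [shiftMap] using hz
  induction m using Int.induction_on with
  | zero => simpa using hx
  | succ k ih => convert shift_mem _ ih using 3; ring
  | pred k ih => convert unshift_mem _ ih using 3; ring

def OccursAt (w : List A) (x : ℤ → A) (i : ℤ) : Prop :=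
  ∀ (j : ℕ) (hj : j < w.length), x (i + j) = w[j]

section OccursAt

variable {w u v : List A} {x y : ℤ → A} {i : ℤ}

theorem occurs_iff_exists_occursAt : Occurs w x ↔ ∃ i, OccursAt w x i := by
  simp only [Occurs, OccursAt, Fin.forall_iff, List.get_eq_getElem]

theorem endsAtZero_iff_occursAt : EndsAtZero x w ↔ OccursAt w x (1 - w.length) := by
  simp only [EndsAtZero, OccursAt, Fin.forall_iff, List.get_eq_getElem]
  refine forall₂_congr fun j _ => ?_
  rw [show (j : ℤ) - ((w.length : ℤ) - 1) = 1 - w.length + j by ring]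

theorem occursAt_append :
    OccursAt (u ++ v) x i ↔ OccursAt u x i ∧ OccursAt v x (i + u.length) := by
  simp only [OccursAt, List.length_append]
  constructor
  · intro h
    refine ⟨fun j hj => ?_, fun j hj => ?_⟩
    · rw [h j (by omega), List.getElem_append_left hj]
    · rw [add_assoc, ← Nat.cast_add, h _ (by omega), List.getElem_append_right (by omega)]
      simp
  · rintro ⟨hu, hv⟩ j hj
    rw [List.getElem_append]
    split_ifs with hju
    · exact hu j hju
    · rw [← hv (j - u.length) (by omega)]
      congr 1
      push_cast [Nat.cast_sub (not_lt.mp hju)]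
      ring

theorem occursAt_translate (m : ℤ) : OccursAt w (fun k => x (k + m)) i ↔ OccursAt w x (i + m) := by
  simp only [OccursAt]
  refine forall₂_congr fun j _ => ?_
  rw [add_right_comm]

theorem OccursAt.congr (h : OccursAt w x i)
    (hxy : ∀ k, i ≤ k → k < i + w.length → y k = x k) : OccursAt w y i :=
  fun j hj => (hxy _ (by omega) (by omega)).trans (h j hj)

theorem OccursAt.eq (hx : OccursAt w x i) (hy : OccursAt w y i) {k : ℤ} (hik : i ≤ k)
    (hki : k < i + w.length) : x k = y k := by
  obtain ⟨j, rfl⟩ : ∃ j : ℕ, k = i + j := ⟨(k - i).toNat, by omega⟩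
  rw [hx j (by omega), hy j (by omega)]

end OccursAt

section OmegaWord

variable {X : Set (ℤ → A)} {b c u v : List A}

theorem omegaWord_iff_forall (hS : shiftMap '' X = X) :
    OmegaWord X b c ↔ ∀ x ∈ X, ∀ p : ℤ, OccursAt b x (p + 1 - b.length) →
      ∃ x' ∈ X, (∀ i ≤ p, x' i = x i) ∧ OccursAt c x' (p + 1) := by
  have hc : ∀ x' : ℤ → A, (∀ j : Fin c.length, x' ((j : ℕ) + 1) = c.get j) ↔ OccursAt c x' 1 :=
    fun x' => by simp only [OccursAt, Fin.forall_iff, List.get_eq_getElem, add_comm]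
  simp only [OmegaWord, endsAtZero_iff_occursAt, hc]
  constructor
  · intro h x hx p hb
    obtain ⟨y, hy, hyx, hyc⟩ := h _ (translate_mem hS hx p)
      ((occursAt_translate p).2 (by convert hb using 1; ring))
    refine ⟨fun i => y (i + -p), translate_mem hS hy _, fun i hi => ?_, ?_⟩
    · simpa using hyx (i + -p) (by omega)
    · exact (occursAt_translate _).2 (by convert hyc using 1; ring)
  · intro h x hx hb
    simpa using h x hx 0 (by simpa using hb)

theorem OmegaWord.append_left (u : List A) (h : OmegaWord X b c) : OmegaWord X (u ++ b) c :=
  fun x hx hub => h x hx <| endsAtZero_iff_occursAt.2 <| by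
    convert (occursAt_append.1 (endsAtZero_iff_occursAt.1 hub)).2 using 1
    push_cast [List.length_append]; ring

theorem OmegaWord.append (hS : shiftMap '' X = X) (hu : OmegaWord X b u)
    (hv : OmegaWord X (b ++ u) v) : OmegaWord X b (u ++ v) := by
  rw [omegaWord_iff_forall hS] at *
  intro x hx p hb
  obtain ⟨x₁, hx₁, hx₁x, hx₁u⟩ := hu x hx p hb
  have hbu : OccursAt (b ++ u) x₁ (p + u.length + 1 - (b ++ u).length) := by
    rw [show p + u.length + 1 - ((b ++ u).length : ℤ) = p + 1 - b.length by
      push_cast [List.length_append]; ring]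
    refine occursAt_append.2 ⟨hb.congr fun k _ hk => hx₁x k (by omega), ?_⟩
    convert hx₁u using 1; ring
  obtain ⟨x₂, hx₂, hx₂x₁, hx₂v⟩ := hv x₁ hx₁ _ hbu
  refine ⟨x₂, hx₂, fun i hi => (hx₂x₁ i (by omega)).trans (hx₁x i hi), occursAt_append.2 ⟨?_, ?_⟩⟩
  · exact hx₁u.congr fun k _ hk => hx₂x₁ k (by omega)
  · convert hx₂v using 1; ring

theorem OmegaWord.of_append (hS : shiftMap '' X = X) (h : OmegaWord X b (u ++ v)) :
    OmegaWord X (b ++ u) v := by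
  rw [omegaWord_iff_forall hS] at *
  intro x hx p hbu
  rw [List.length_append, occursAt_append] at hbu
  obtain ⟨hb, hu⟩ := hbu
  obtain ⟨x', hx', hx'x, hx'uv⟩ := h x hx (p - u.length) (by convert hb using 1; push_cast; ring)
  rw [occursAt_append] at hx'uv
  obtain ⟨hx'u, hx'v⟩ := hx'uv
  refine ⟨x', hx', fun i hi => ?_, by convert hx'v using 1; ring⟩
  rcases le_or_gt i (p - u.length) with hi' | hi'
  · exact hx'x i hi'
  · exact hx'u.eq (by convert hu using 1; push_cast; ring) (by omega) (by omega)

theorem Admissible.append_of_omegaWord (hS : shiftMap '' X = X) (hb : Admissible X b)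
    (h : OmegaWord X b c) : Admissible X (b ++ c) := by
  obtain ⟨x, hx, hxb⟩ := hb
  obtain ⟨i, hi⟩ := occurs_iff_exists_occursAt.1 hxb
  obtain ⟨x', hx', hx'x, hx'c⟩ :=
    (omegaWord_iff_forall hS).1 h x hx (i + b.length - 1) (by convert hi using 1; ring)
  refine ⟨x', hx', occurs_iff_exists_occursAt.2 ⟨i, occursAt_append.2 ⟨?_, ?_⟩⟩⟩
  · exact hi.congr fun k _ hk => hx'x k (by omega)
  · convert hx'c using 1; ring

end OmegaWord

section Admissible

variable {X : Set (ℤ → A)} {u v : List A}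

theorem Admissible.of_append_left (h : Admissible X (u ++ v)) : Admissible X u := by
  obtain ⟨x, hx, hxuv⟩ := h
  obtain ⟨i, hi⟩ := occurs_iff_exists_occursAt.1 hxuv
  exact ⟨x, hx, occurs_iff_exists_occursAt.2 ⟨i, (occursAt_append.1 hi).1⟩⟩

theorem Admissible.of_append_right (h : Admissible X (u ++ v)) : Admissible X v := by
  obtain ⟨x, hx, hxuv⟩ := h
  obtain ⟨i, hi⟩ := occurs_iff_exists_occursAt.1 hxuv
  exact ⟨x, hx, occurs_iff_exists_occursAt.2 ⟨_, (occursAt_append.1 hi).2⟩⟩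

theorem Admissible.exists_cons (h : Admissible X u) : ∃ τ : A, Admissible X (τ :: u) := by
  obtain ⟨x, hx, hxu⟩ := h
  obtain ⟨i, hi⟩ := occurs_iff_exists_occursAt.1 hxu
  refine ⟨x (i - 1), x, hx, occurs_iff_exists_occursAt.2 ⟨i - 1, ?_⟩⟩
  refine (occursAt_append (u := [x (i - 1)])).2 ⟨fun j hj => ?_, by simpa using hi⟩
  obtain rfl : j = 0 := by simpa using hj
  simp

end Admissible

theorem PropertyD.exists_omegaWord {X : Set (ℤ → A)} (hS : shiftMap '' X = X)
    (hD : PropertyD X) (w : List A) :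
    ∀ v : List A, v ≠ [] → Admissible X (v ++ w) →
      ∃ b : List A, Admissible X (b ++ v) ∧ OmegaWord X (b ++ v) w := by
  induction w using List.reverseRecOn with
  | nil =>
    intro v _ hv
    exact ⟨[], by simpa using hv, fun x hx _ => ⟨x, hx, fun _ _ => rfl, fun j => j.elim0⟩⟩
  | append_singleton w σ ih =>
    intro v hv hvwσ
    obtain ⟨a, ha, havw, hσ⟩ := hD (v ++ w) σ (by simp [hv]) (by simpa using hvwσ)
    obtain ⟨b, hbav, hw⟩ := ih (a ++ v) (by simp [ha]) (by simpa using havw)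
    refine ⟨b ++ a, by simpa using hbav, ?_⟩
    have hσ' : OmegaWord X ((b ++ a) ++ v ++ w) [σ] := by
      simpa using OmegaWord.append_left b hσ
    exact OmegaWord.append hS (by simpa using hw) hσ'

end SymbolicDynamics

theorem stmt5_general {A : Type*} [TopologicalSpace A]
    (X : Set (ℤ → A)) (hX : IsSubshift X) :
    PropertyD X ↔
      ∀ a c : List A, a ≠ [] → c ≠ [] → Admissible X a → Admissible X c →
        Admissible X (a ++ c) →
        ∃ b : List A, b ≠ [] ∧ Admissible X b ∧ Admissible X (b ++ a) ∧
          OmegaWord X b (a ++ c) := by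
  obtain ⟨-, -, hS⟩ := hX
  constructor
  · intro hD a c _ _ _ _ hac
    -- (D) only speaks of nonempty contexts, so start from a letter `τ` preceding `ac`.
    obtain ⟨τ, hτac⟩ := hac.exists_cons
    obtain ⟨b, hbτ, hb⟩ := hD.exists_omegaWord hS (a ++ c) [τ] (by simp) hτac
    have hbτac : Admissible X ((b ++ [τ] ++ a) ++ c) := by
      simpa using hbτ.append_of_omegaWord hS hb
    exact ⟨b ++ [τ], by simp, hbτ, hbτac.of_append_left, hb⟩
  · intro h b σ hb hbσ
    obtain ⟨a, ha, -, hab, habσ⟩ :=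
      h b [σ] hb (by simp) hbσ.of_append_left hbσ.of_append_right hbσ
    exact ⟨a, ha, hab, habσ.of_append hS⟩

/-- Lemma 3.3.  `X` has property (D) iff for all admissible words
`a`, `c` with `ac` admissible there is an admissible word `b` with `ba` admissible and
`ac ∈ ω⁺(b)`. -/
theorem stmt5 {A : Type*} [Fintype A] [Nonempty A] [TopologicalSpace A] [DiscreteTopology A]
    (X : Set (ℤ → A)) (hX : IsSubshift X) :
    PropertyD X ↔
      ∀ a c : List A, a ≠ [] → c ≠ [] → Admissible X a → Admissible X c →
        Admissible X (a ++ c) →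
        ∃ b : List A, b ≠ [] ∧ Admissible X b ∧ Admissible X (b ++ a) ∧
          OmegaWord X b (a ++ c) :=
  stmt5_general X hX
end

section
/- Let M ⊆ P(Σ^ℕ) be compact, transition complete, in-complete and contractive, and let X ⊆ Σ^ℤ be the subshift presented by M. Then X has a g-function g such that for every x⁻ ∈ X⁻, every σ ∈ Γ₁⁺(x⁻), and every choice of μ_k ∈ M with μ_k(C((x_{-k},…,x_0))) > 0 for all k, one has g(x⁻,σ) = lim_{k→∞} τ_{(x_{-k},…,x_0)}(μ_k)(C(σ)). In particular X has property g. -/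
open Set Filter Topology

/-! Borel probability measures on `A^ℕ` are encoded by their values on cylinder sets:
a measure is recorded as the function `μ : List A → ℝ` with `μ w = μ(C(w))` (this is a
canonical bijection, by the Kolmogorov extension theorem).  Under this encoding the
topology of weak convergence corresponds to the topology of pointwise convergence of the
cylinder values, i.e. to the subspace topology inherited from the product topology on
`List A → ℝ`. -/

/-- `μ : List A → ℝ` represents a Borel probability measure on `A^ℕ` via its cylinder
values. -/
def IsCylMeasure {A : Type*} [Fintype A] (μ : List A → ℝ) : Prop :=
  μ [] = 1 ∧ (∀ w, 0 ≤ μ w) ∧ ∀ w : List A, μ w = ∑ σ : A, μ (w ++ [σ])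

/-- The conditional measure `τ_w(μ)` of `μ` given the cylinder `C(w)`:
`τ_w(μ)(C(v)) = μ(C(wv))/μ(C(w))`. -/
noncomputable def tauWord {A : Type*} (w : List A) (μ : List A → ℝ) : List A → ℝ :=
  fun v => μ (w ++ v) / μ w

/-- `M` is transition complete. -/
def TransitionComplete {A : Type*} (M : Set (List A → ℝ)) : Prop :=
  ∀ μ ∈ M, ∀ σ : A, 0 < μ [σ] → tauWord [σ] μ ∈ M

/-- `M` is in-complete: every `μ ∈ M` has a predecessor. -/
def InComplete {A : Type*} (M : Set (List A → ℝ)) : Prop :=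
  ∀ μ ∈ M, ∃ ν ∈ M, ∃ σ : A, 0 < ν [σ] ∧ tauWord [σ] ν = μ

/-- `M` presents `X`: the admissible words of `X` are exactly the finite words with
positive measure for some `μ ∈ M`. -/
def Presents {A : Type*} (M : Set (List A → ℝ)) (X : Set (ℤ → A)) : Prop :=
  ∀ w : List A, Admissible X w ↔ ∃ μ ∈ M, 0 < μ w

/-- Contractivity: for every `x⁻ ∈ X⁻` the diameter of the set
`{τ_{(x_{-k},…,x_0)}(μ) : μ ∈ M, μ(C((x_{-k},…,x_0))) > 0}` tends to `0` as `k → ∞`.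
This is expressed coordinatewise on cylinder values; on the compact metrizable space of
probability measures this is equivalent to convergence of the diameters to `0` with
respect to any fixed compatible metric. -/
def Contractive {A : Type*} (M : Set (List A → ℝ)) (X : Set (ℤ → A)) : Prop :=
  ∀ u ∈ Xminus X, ∀ v : List A, ∀ ε > (0 : ℝ), ∃ K : ℕ, ∀ k ≥ K,
    ∀ μ ∈ M, ∀ ν ∈ M, 0 < μ (lastWord u k) → 0 < ν (lastWord u k) →
      |tauWord (lastWord u k) μ v - tauWord (lastWord u k) ν v| ≤ ε

/-! The conditional probabilities `τ_{(x_{-k},…,x_0)}(μ_k)(C(σ))` form a Cauchy sequence: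
by transition completeness, conditioning on the long word `(x_{-k},…,x_0)` equals
conditioning some other `ν ∈ M` on the shorter word `(x_{-K},…,x_0)`, and contractivity
makes all these measures close once `K` is large. The limit `g` inherits the bounds and the
normalization of the conditional probabilities, is locally determined by a finite past
(hence continuous), and vanishes off `Γ₁⁺` because positive mass of `(x_{-k},…,x_0)σ` makes
that word admissible for every `k`, and `X` is compact. Finally, a letter with
`g(x⁻,σ) > 0` stays positive on all pasts sharing a long enough final word with `x⁻`,
which puts it in `Δ₁⁺(x⁻)`. -/

section CylinderMeasures

variable {A : Type*}

theorem IsCylMeasure.apply_append_le [Fintype A] {μ : List A → ℝ} (h : IsCylMeasure μ)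
    (w v : List A) : μ (w ++ v) ≤ μ w := by
  induction v using List.reverseRecOn with
  | nil => simp
  | append_singleton v σ ih =>
    calc μ (w ++ (v ++ [σ])) = μ ((w ++ v) ++ [σ]) := by rw [List.append_assoc]
      _ ≤ ∑ τ : A, μ ((w ++ v) ++ [τ]) :=
        Finset.single_le_sum (fun τ _ => h.2.1 ((w ++ v) ++ [τ])) (Finset.mem_univ σ)
      _ = μ (w ++ v) := (h.2.2 _).symm
      _ ≤ μ w := ih

theorem IsCylMeasure.tauWord_mem_Icc [Fintype A] {μ : List A → ℝ} (h : IsCylMeasure μ)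
    {w : List A} (hw : 0 < μ w) (v : List A) : tauWord w μ v ∈ Icc 0 1 :=
  ⟨div_nonneg (h.2.1 _) (h.2.1 _), div_le_one_of_le₀ (h.apply_append_le w v) hw.le⟩

theorem IsCylMeasure.sum_tauWord_singleton [Fintype A] {μ : List A → ℝ}
    (h : IsCylMeasure μ) {w : List A} (hw : 0 < μ w) : ∑ σ : A, tauWord w μ [σ] = 1 := by
  simp only [tauWord]
  rw [← Finset.sum_div, ← h.2.2 w, div_self hw.ne']

theorem tauWord_cons (μ : List A → ℝ) {σ : A} (hσ : μ [σ] ≠ 0) (w : List A) :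
    tauWord (σ :: w) μ = tauWord w (tauWord [σ] μ) := by
  funext v
  simp only [tauWord, List.cons_append, List.nil_append, div_div_div_cancel_right₀ hσ]

end CylinderMeasures

section LastWord

variable {A : Type*}

theorem length_lastWord (u : ℕ → A) (n : ℕ) : (lastWord u n).length = n + 1 := by
  simp [lastWord]

theorem getElem_lastWord (u : ℕ → A) (n j : ℕ) (h : j < (lastWord u n).length) :
    (lastWord u n)[j] = u (n - j) :=
  List.getElem_ofFn ..

theorem lastWord_succ (u : ℕ → A) (n : ℕ) :
    lastWord u (n + 1) = u (n + 1) :: lastWord u n := by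
  simp only [lastWord, List.ofFn_succ, Fin.val_zero, Nat.sub_zero, Fin.val_succ,
    Nat.add_sub_add_right]

theorem lastWord_congr {u v : ℕ → A} {n : ℕ} (h : ∀ m ≤ n, u m = v m) :
    lastWord u n = lastWord v n := by
  simp only [lastWord]
  congr 1
  funext j
  exact h _ (Nat.sub_le _ _)

theorem eventually_lastWord_eq [TopologicalSpace A] [DiscreteTopology A] (u : ℕ → A)
    (n : ℕ) : ∀ᶠ v in 𝓝 u, lastWord v n = lastWord u n := by
  have hagree : ∀ᶠ v in 𝓝 u, ∀ m ∈ Finset.range (n + 1), v m = u m :=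
    (eventually_all_finset _).2 fun m _ =>
      (continuous_apply m).continuousAt (isOpen_discrete {u m} |>.mem_nhds rfl)
  filter_upwards [hagree] with v hv
  exact lastWord_congr fun m hm => hv m (Finset.mem_range_succ_iff.2 hm)

theorem lastWord_eq_of_endsAtZero {x : ℤ → A} {u : ℕ → A} {n : ℕ}
    (hx : EndsAtZero x (lastWord u n)) : lastWord (fun m : ℕ => x (-m)) n = lastWord u n := by
  refine lastWord_congr fun m hm => ?_
  have hj : n - m < (lastWord u n).length := by rw [length_lastWord]; omega
  have hxj := hx ⟨n - m, hj⟩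
  simp only [List.get_eq_getElem, getElem_lastWord, length_lastWord, Nat.sub_sub_self hm,
    Nat.cast_sub hm] at hxj
  rw [← hxj]
  push_cast
  ring_nf

end LastWord

section Subshifts

variable {A : Type*} {X : Set (ℤ → A)}

theorem translate_mem_of_image_shiftMap_eq (hX : shiftMap '' X = X) (m : ℤ) {x : ℤ → A}
    (hx : x ∈ X) : (fun i => x (i + m)) ∈ X := by
  have hinj : Function.Injective (shiftMap (A := A)) := fun y z h =>
    funext fun i => by simpa [shiftMap] using congrFun h (i - 1)
  induction m using Int.induction_on with
  | zero => simpa using hx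
  | succ n ih =>
    rw [← hX]
    exact ⟨_, ih, funext fun i => by simp only [shiftMap]; congr 1; ring⟩
  | pred n ih =>
    rw [← hX] at ih
    obtain ⟨y, hy, hyx⟩ := ih
    convert hy using 1
    exact hinj ((funext fun i => by simp only [shiftMap]; congr 1; ring).trans hyx.symm)

theorem admissible_lastWord {u : ℕ → A} (hu : u ∈ Xminus X) (k : ℕ) :
    Admissible X (lastWord u k) := by
  obtain ⟨x, hx, hux⟩ := hu
  refine ⟨x, hx, -(k : ℤ), fun j => ?_⟩
  have hj : (j : ℕ) ≤ k := Nat.lt_succ_iff.mp (j.isLt.trans_eq (length_lastWord u k))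
  rw [List.get_eq_getElem, getElem_lastWord, hux, Nat.cast_sub hj]
  ring_nf

theorem exists_mem_of_admissible_lastWord_append (hX : shiftMap '' X = X) {u : ℕ → A}
    {σ : A} {k : ℕ} (h : Admissible X (lastWord u k ++ [σ])) :
    ∃ y ∈ X, (∀ n ≤ k, y (-n) = u n) ∧ y 1 = σ := by
  obtain ⟨x, hx, i, hi⟩ := h
  have hlen : (lastWord u k ++ [σ]).length = k + 2 := by simp [length_lastWord]
  refine ⟨fun s => x (s + (i + k)), translate_mem_of_image_shiftMap_eq hX _ hx, ?_, ?_⟩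
  · intro n hn
    have hxj := hi ⟨k - n, by rw [hlen]; omega⟩
    simp only [List.get_eq_getElem] at hxj
    rw [List.getElem_append_left (by rw [length_lastWord]; omega),
      getElem_lastWord, Nat.sub_sub_self hn, Nat.cast_sub hn] at hxj
    simp only
    rw [← hxj]
    ring_nf
  · have hxj := hi ⟨k + 1, by rw [hlen]; omega⟩
    rw [List.get_eq_getElem, List.getElem_concat_length (length_lastWord u k).symm] at hxj
    simp only
    rw [← hxj]
    push_cast
    ring_nf

theorem mem_Gamma1_of_forall_exists [Finite A] [TopologicalSpace A] [DiscreteTopology A]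
    (hX : IsClosed X) {u : ℕ → A} {σ : A}
    (h : ∀ k : ℕ, ∃ y ∈ X, (∀ n ≤ k, y (-n) = u n) ∧ y 1 = σ) : σ ∈ Gamma1 X u := by
  set C : ℕ → Set (ℤ → A) := fun k => X ∩ (⋂ n ∈ Iic k, {y | y (-n) = u n}) ∩ {y | y 1 = σ}
  have hclosed (k : ℕ) : IsClosed (C k) :=
    (hX.inter (isClosed_biInter fun n _ => isClosed_eq (continuous_apply _) continuous_const)).inter
      (isClosed_eq (continuous_apply _) continuous_const)
  have hmono (k : ℕ) : C (k + 1) ⊆ C k :=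
    inter_subset_inter_left _ <| inter_subset_inter_right _ <|
      biInter_subset_biInter_left <| Iic_subset_Iic.2 k.le_succ
  have hne (k : ℕ) : (C k).Nonempty := by
    obtain ⟨y, hy, hyu, hyσ⟩ := h k
    exact ⟨y, ⟨hy, by simpa using hyu⟩, hyσ⟩
  obtain ⟨y, hy⟩ := IsCompact.nonempty_iInter_of_sequence_nonempty_isCompact_isClosed C hmono
    hne (hclosed 0).isCompact hclosed
  simp only [C, mem_iInter, mem_inter_iff, mem_ofPred_eq, mem_Iic] at hy
  exact ⟨y, (hy 0).1.1, fun n => (hy n).1.2 n le_rfl, (hy 0).2⟩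

theorem mem_omega1_of_forall_mem_Gamma1 {b : List A} {σ : A}
    (h : ∀ x ∈ X, EndsAtZero x b → σ ∈ Gamma1 X (fun n : ℕ => x (-n))) : σ ∈ omega1 X b := by
  intro x hx hxb
  obtain ⟨y, hy, hyx, hyσ⟩ := h x hx hxb
  refine ⟨y, hy, fun i hi => ?_, fun j => ?_⟩
  · simpa [Int.toNat_of_nonneg (neg_nonneg.2 hi)] using hyx (-i).toNat
  · obtain ⟨_ | _, hj⟩ := j
    · simpa using hyσ
    · simp at hj

end Subshifts

section Conditioning

variable {A : Type*} {M : Set (List A → ℝ)} {X : Set (ℤ → A)}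

theorem exists_tauWord_lastWord_eq [Fintype A] (hM : ∀ μ ∈ M, IsCylMeasure μ)
    (htc : TransitionComplete M) (u : ℕ → A) {K k : ℕ} (hk : K ≤ k) {μ : List A → ℝ}
    (hμ : μ ∈ M) (hpos : 0 < μ (lastWord u k)) :
    ∃ ν ∈ M, 0 < ν (lastWord u K) ∧ tauWord (lastWord u k) μ = tauWord (lastWord u K) ν := by
  induction k, hk using Nat.le_induction generalizing μ with
  | base => exact ⟨μ, hμ, hpos, rfl⟩
  | succ k hk ih =>
    rw [lastWord_succ] at hpos ⊢
    have hσ : 0 < μ [u (k + 1)] :=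
      hpos.trans_le ((hM μ hμ).apply_append_le [u (k + 1)] (lastWord u k))
    rw [tauWord_cons μ hσ.ne']
    exact ih (htc μ hμ _ hσ) (div_pos hpos hσ)

/-- `hB` is the contractivity bound at level `K`; by transition completeness it persists for all
longer final words. -/
theorem abs_tauWord_sub_le_of_lastWord_eq [Fintype A] (hM : ∀ μ ∈ M, IsCylMeasure μ)
    (htc : TransitionComplete M) {u u' : ℕ → A} {K k m : ℕ} {v : List A} {ε : ℝ}
    (hW : lastWord u' K = lastWord u K)
    (hB : ∀ μ ∈ M, ∀ ν ∈ M, 0 < μ (lastWord u K) → 0 < ν (lastWord u K) →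
      |tauWord (lastWord u K) μ v - tauWord (lastWord u K) ν v| ≤ ε)
    (hk : K ≤ k) (hm : K ≤ m) {μ ν : List A → ℝ} (hμ : μ ∈ M) (hν : ν ∈ M)
    (hμpos : 0 < μ (lastWord u k)) (hνpos : 0 < ν (lastWord u' m)) :
    |tauWord (lastWord u k) μ v - tauWord (lastWord u' m) ν v| ≤ ε := by
  obtain ⟨μ', hμ', hμ'pos, hμ'eq⟩ := exists_tauWord_lastWord_eq hM htc u hk hμ hμpos
  obtain ⟨ν', hν', hν'pos, hν'eq⟩ := exists_tauWord_lastWord_eq hM htc u' hm hν hνpos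
  rw [hW] at hν'eq hν'pos
  rw [hμ'eq, hν'eq]
  exact hB μ' hμ' ν' hν' hμ'pos hν'pos

def IsAdapted (M : Set (List A → ℝ)) (u : ℕ → A) (μs : ℕ → List A → ℝ) : Prop :=
  ∀ k, μs k ∈ M ∧ 0 < μs k (lastWord u k)

theorem exists_isAdapted (hpres : Presents M X) {u : ℕ → A} (hu : u ∈ Xminus X) :
    ∃ μs, IsAdapted M u μs :=
  ⟨fun k => ((hpres _).1 (admissible_lastWord hu k)).choose,
    fun k => ((hpres _).1 (admissible_lastWord hu k)).choose_spec⟩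

theorem cauchySeq_tauWord [Fintype A] (hM : ∀ μ ∈ M, IsCylMeasure μ)
    (htc : TransitionComplete M) (hcontr : Contractive M X) {u : ℕ → A} (hu : u ∈ Xminus X)
    {μs : ℕ → List A → ℝ} (hμs : IsAdapted M u μs) (v : List A) :
    CauchySeq fun k => tauWord (lastWord u k) (μs k) v := by
  refine Metric.cauchySeq_iff'.2 fun ε hε => ?_
  obtain ⟨K, hK⟩ := hcontr u hu v (ε / 2) (half_pos hε)
  refine ⟨K, fun k hk => ?_⟩
  rw [Real.dist_eq]
  exact (abs_tauWord_sub_le_of_lastWord_eq hM htc rfl (hK K le_rfl) hk le_rfl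
    (hμs k).1 (hμs K).1 (hμs k).2 (hμs K).2).trans_lt (half_lt_self hε)

theorem Filter.Tendsto.tauWord_of_isAdapted [Fintype A] (hM : ∀ μ ∈ M, IsCylMeasure μ)
    (htc : TransitionComplete M) (hcontr : Contractive M X) {u : ℕ → A} (hu : u ∈ Xminus X)
    {μs μs' : ℕ → List A → ℝ} (hμs : IsAdapted M u μs) (hμs' : IsAdapted M u μs')
    {v : List A} {L : ℝ} (hL : Tendsto (fun k => tauWord (lastWord u k) (μs k) v) atTop (𝓝 L)) :
    Tendsto (fun k => tauWord (lastWord u k) (μs' k) v) atTop (𝓝 L) := by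
  refine hL.congr_dist (Metric.tendsto_atTop.2 fun ε hε => ?_)
  obtain ⟨K, hK⟩ := hcontr u hu v (ε / 2) (half_pos hε)
  refine ⟨K, fun k hk => ?_⟩
  rw [Real.dist_0_eq_abs, abs_dist]
  exact (abs_tauWord_sub_le_of_lastWord_eq hM htc rfl (hK K le_rfl) hk hk
    (hμs k).1 (hμs' k).1 (hμs k).2 (hμs' k).2).trans_lt (half_lt_self hε)

/-- Junk unless `u ∈ X⁻`, where by `tendsto_tauLimit` it does not depend on the adapted
sequence chosen here. -/
noncomputable def tauLimit (M : Set (List A → ℝ)) (u : ℕ → A) (v : List A) : ℝ :=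
  limUnder atTop fun k => tauWord (lastWord u k) (Classical.epsilon (IsAdapted M u) k) v

theorem tendsto_tauLimit [Fintype A] (hM : ∀ μ ∈ M, IsCylMeasure μ)
    (htc : TransitionComplete M) (hpres : Presents M X) (hcontr : Contractive M X)
    {u : ℕ → A} (hu : u ∈ Xminus X) {μs : ℕ → List A → ℝ} (hμs : IsAdapted M u μs)
    (v : List A) :
    Tendsto (fun k => tauWord (lastWord u k) (μs k) v) atTop (𝓝 (tauLimit M u v)) := by
  have hε := Classical.epsilon_spec (exists_isAdapted hpres hu)
  exact (cauchySeq_tauWord hM htc hcontr hu hε v).tendsto_limUnder.tauWord_of_isAdapted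
    hM htc hcontr hu hε hμs

end Conditioning

section LimitProperties

variable {A : Type*} [Fintype A] {M : Set (List A → ℝ)} {X : Set (ℤ → A)}

theorem tauLimit_mem_Icc (hM : ∀ μ ∈ M, IsCylMeasure μ) (htc : TransitionComplete M)
    (hpres : Presents M X) (hcontr : Contractive M X) {u : ℕ → A} (hu : u ∈ Xminus X)
    (v : List A) : tauLimit M u v ∈ Icc 0 1 := by
  obtain ⟨μs, hμs⟩ := exists_isAdapted hpres hu
  exact isClosed_Icc.mem_of_tendsto (tendsto_tauLimit hM htc hpres hcontr hu hμs v)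
    (Eventually.of_forall fun k => (hM _ (hμs k).1).tauWord_mem_Icc (hμs k).2 v)

theorem sum_tauLimit_singleton (hM : ∀ μ ∈ M, IsCylMeasure μ) (htc : TransitionComplete M)
    (hpres : Presents M X) (hcontr : Contractive M X) {u : ℕ → A} (hu : u ∈ Xminus X) :
    ∑ σ : A, tauLimit M u [σ] = 1 := by
  obtain ⟨μs, hμs⟩ := exists_isAdapted hpres hu
  have hsum := tendsto_finsetSum Finset.univ fun σ _ =>
    tendsto_tauLimit hM htc hpres hcontr hu hμs [σ]
  have hone (k : ℕ) : ∑ σ : A, tauWord (lastWord u k) (μs k) [σ] = 1 :=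
    (hM _ (hμs k).1).sum_tauWord_singleton (hμs k).2
  simp only [hone] at hsum
  exact tendsto_nhds_unique hsum tendsto_const_nhds

theorem mem_Gamma1_of_tauLimit_pos [TopologicalSpace A] [DiscreteTopology A]
    (hXcl : IsClosed X) (hXinv : shiftMap '' X = X) (hM : ∀ μ ∈ M, IsCylMeasure μ)
    (htc : TransitionComplete M) (hpres : Presents M X) (hcontr : Contractive M X)
    {u : ℕ → A} (hu : u ∈ Xminus X) {σ : A} (hσ : 0 < tauLimit M u [σ]) :
    σ ∈ Gamma1 X u := by
  obtain ⟨μs, hμs⟩ := exists_isAdapted hpres hu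
  obtain ⟨N, hN⟩ := eventually_atTop.1 <|
    (tendsto_tauLimit hM htc hpres hcontr hu hμs [σ]).eventually (eventually_gt_nhds hσ)
  refine mem_Gamma1_of_forall_exists hXcl fun k => ?_
  have hpos : 0 < μs (max k N) (lastWord u (max k N) ++ [σ]) :=
    (div_pos_iff_of_pos_right (hμs _).2).1 (hN _ (le_max_right k N))
  obtain ⟨y, hy, hyu, hyσ⟩ :=
    exists_mem_of_admissible_lastWord_append hXinv ((hpres _).2 ⟨_, (hμs _).1, hpos⟩)
  exact ⟨y, hy, fun n hn => hyu n (hn.trans (le_max_left k N)), hyσ⟩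

theorem tauLimit_eq_zero_of_notMem_Gamma1 [TopologicalSpace A] [DiscreteTopology A]
    (hXcl : IsClosed X) (hXinv : shiftMap '' X = X) (hM : ∀ μ ∈ M, IsCylMeasure μ)
    (htc : TransitionComplete M) (hpres : Presents M X) (hcontr : Contractive M X)
    {u : ℕ → A} (hu : u ∈ Xminus X) {σ : A} (hσ : σ ∉ Gamma1 X u) : tauLimit M u [σ] = 0 :=
  (tauLimit_mem_Icc hM htc hpres hcontr hu _).1.eq_of_not_lt' fun hpos =>
    hσ (mem_Gamma1_of_tauLimit_pos hXcl hXinv hM htc hpres hcontr hu hpos)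

theorem abs_tauLimit_sub_le_of_lastWord_eq (hM : ∀ μ ∈ M, IsCylMeasure μ)
    (htc : TransitionComplete M) (hpres : Presents M X) (hcontr : Contractive M X)
    {u u' : ℕ → A} (hu : u ∈ Xminus X) (hu' : u' ∈ Xminus X) {K : ℕ} {v : List A} {ε : ℝ}
    (hW : lastWord u' K = lastWord u K)
    (hB : ∀ μ ∈ M, ∀ ν ∈ M, 0 < μ (lastWord u K) → 0 < ν (lastWord u K) →
      |tauWord (lastWord u K) μ v - tauWord (lastWord u K) ν v| ≤ ε) :
    |tauLimit M u v - tauLimit M u' v| ≤ ε := by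
  obtain ⟨μs, hμs⟩ := exists_isAdapted hpres hu
  obtain ⟨μs', hμs'⟩ := exists_isAdapted hpres hu'
  refine le_of_tendsto (((tendsto_tauLimit hM htc hpres hcontr hu hμs v).sub
    (tendsto_tauLimit hM htc hpres hcontr hu' hμs' v)).abs) (eventually_atTop.2 ⟨K, ?_⟩)
  exact fun k hk => abs_tauWord_sub_le_of_lastWord_eq hM htc hW hB hk hk
    (hμs k).1 (hμs' k).1 (hμs k).2 (hμs' k).2

theorem continuousOn_tauLimit [TopologicalSpace A] [DiscreteTopology A]
    (hM : ∀ μ ∈ M, IsCylMeasure μ) (htc : TransitionComplete M) (hpres : Presents M X)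
    (hcontr : Contractive M X) :
    ContinuousOn (fun p : (ℕ → A) × A => tauLimit M p.1 [p.2]) (Xminus X ×ˢ univ) := by
  rintro ⟨u, σ⟩ ⟨hu, -⟩
  refine Metric.tendsto_nhds.2 fun ε hε => ?_
  obtain ⟨K, hK⟩ := hcontr u hu [σ] (ε / 2) (half_pos hε)
  have hnear : ∀ᶠ p : (ℕ → A) × A in 𝓝 (u, σ), lastWord p.1 K = lastWord u K ∧ p.2 = σ := by
    rw [nhds_prod_eq]
    exact (eventually_lastWord_eq u K).prod_mk (isOpen_discrete {σ} |>.mem_nhds rfl)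
  filter_upwards [eventually_nhdsWithin_of_eventually_nhds hnear, self_mem_nhdsWithin]
    with p ⟨hW, hτ⟩ ⟨hu', _⟩
  rw [hτ, Real.dist_eq, abs_sub_comm]
  exact (abs_tauLimit_sub_le_of_lastWord_eq hM htc hpres hcontr hu hu' hW (hK K le_rfl)).trans_lt
    (half_lt_self hε)

theorem propertyG_of_contractive [TopologicalSpace A] [DiscreteTopology A]
    (hXcl : IsClosed X) (hXinv : shiftMap '' X = X) (hM : ∀ μ ∈ M, IsCylMeasure μ)
    (htc : TransitionComplete M) (hpres : Presents M X) (hcontr : Contractive M X) :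
    PropertyG X := by
  intro u hu
  obtain ⟨σ, -, hσ⟩ : ∃ σ ∈ Finset.univ, (0 : ℝ) < tauLimit M u [σ] :=
    Finset.exists_lt_of_sum_lt (by simp [sum_tauLimit_singleton hM htc hpres hcontr hu])
  obtain ⟨K, hK⟩ := hcontr u hu [σ] (tauLimit M u [σ] / 2) (half_pos hσ)
  refine ⟨σ, mem_iUnion.2 ⟨K, mem_omega1_of_forall_mem_Gamma1 fun x hx hxK => ?_⟩⟩
  have hu' : (fun n : ℕ => x (-n)) ∈ Xminus X := ⟨x, hx, fun _ => rfl⟩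
  have hclose := abs_tauLimit_sub_le_of_lastWord_eq hM htc hpres hcontr hu hu'
    (lastWord_eq_of_endsAtZero hxK) (hK K le_rfl)
  refine mem_Gamma1_of_tauLimit_pos hXcl hXinv hM htc hpres hcontr hu' ?_
  linarith [le_abs_self (tauLimit M u [σ] - tauLimit M (fun n : ℕ => x (-n)) [σ])]

end LimitProperties

theorem stmt7_general {A : Type*} [Fintype A] [TopologicalSpace A] [DiscreteTopology A]
    (X : Set (ℤ → A)) (hX : IsSubshift X)
    (M : Set (List A → ℝ)) (hMmeas : ∀ μ ∈ M, IsCylMeasure μ)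
    (htc : TransitionComplete M)
    (hpres : Presents M X) (hcontr : Contractive M X) :
    ∃ g : (ℕ → A) → A → ℝ, IsGFunction X g ∧
      (∀ u ∈ Xminus X, ∀ σ ∈ Gamma1 X u, ∀ μs : ℕ → (List A → ℝ),
        (∀ k : ℕ, μs k ∈ M ∧ 0 < μs k (lastWord u k)) →
        Filter.Tendsto (fun k => tauWord (lastWord u k) (μs k) [σ])
          Filter.atTop (nhds (g u σ))) ∧
      PropertyG X := by
  obtain ⟨-, hXcl, hXinv⟩ := hX
  refine ⟨fun u σ => tauLimit M u [σ], ⟨?_, ?_, ?_⟩, ?_,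
    propertyG_of_contractive hXcl hXinv hMmeas htc hpres hcontr⟩
  · exact (continuousOn_tauLimit hMmeas htc hpres hcontr).mono fun p hp => ⟨hp.1, trivial⟩
  · exact fun u hu σ _ => tauLimit_mem_Icc hMmeas htc hpres hcontr hu [σ]
  · intro u hu
    rw [← sum_tauLimit_singleton hMmeas htc hpres hcontr hu]
    refine Finset.sum_congr rfl fun σ _ => ?_
    by_cases hσ : σ ∈ Gamma1 X u
    · exact indicator_of_mem hσ _
    · rw [indicator_of_notMem hσ,
        tauLimit_eq_zero_of_notMem_Gamma1 hXcl hXinv hMmeas htc hpres hcontr hu hσ]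
  · exact fun u hu σ _ μs hμs => tendsto_tauLimit hMmeas htc hpres hcontr hu hμs [σ]

/-- Proposition 3.1.  A subshift presented by a compact, transition
complete, in-complete and contractive set `M` of probability measures has a g-function
given by `g (x⁻,σ) = lim_k τ_{(x_{-k},…,x_0)}(μ_k)(C(σ))` for any choices
`μ_k ∈ M` with `μ_k(C((x_{-k},…,x_0))) > 0`; in particular it has property g. -/
theorem stmt7 {A : Type*} [Fintype A] [Nonempty A] [TopologicalSpace A] [DiscreteTopology A]
    (X : Set (ℤ → A)) (hX : IsSubshift X)
    (M : Set (List A → ℝ)) (hMmeas : ∀ μ ∈ M, IsCylMeasure μ)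
    (hcomp : IsCompact M) (htc : TransitionComplete M) (hic : InComplete M)
    (hpres : Presents M X) (hcontr : Contractive M X) :
    ∃ g : (ℕ → A) → A → ℝ, IsGFunction X g ∧
      (∀ u ∈ Xminus X, ∀ σ ∈ Gamma1 X u, ∀ μs : ℕ → (List A → ℝ),
        (∀ k : ℕ, μs k ∈ M ∧ 0 < μs k (lastWord u k)) →
        Filter.Tendsto (fun k => tauWord (lastWord u k) (μs k) [σ])
          Filter.atTop (nhds (g u σ))) ∧
      PropertyG X :=
  stmt7_general X hX M hMmeas htc hpres hcontr
end
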